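/- arXiv:2404.09314 — 8 statements merged into one kernel-verified Lean document; each statement's English description precedes it below -/
import Mathlib

section
/- In the Nichols Hopf algebra K_n, every left integral is a scalar multiple of (1+K)ξ_1⋯ξ_n, and every right integral is a scalar multiple of ξ_1⋯ξ_n(1+K). Consequently, K_n is unimodular if and only if n is even. -/
/-- The ordered product `ξ_{i_1}⋯ξ_{i_k}` over a finite set of indices
`s = {i_1 < ⋯ < i_k}`. -/
noncomputable def finsetWord {n : ℕ} {A : Type*} [Ring A] (ξ : Fin n → A)
    (s : Finset (Fin n)) : A :=
  ((s.sort (· ≤ ·)).map ξ).prod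


section Aux
variable {n : ℕ} {A : Type*} [Ring A] [Algebra ℂ A] (ξ : Fin n → A)

/-- moving an element that anticommutes with all ξ's through a word -/
lemma aux_comm (w : A) (hw : ∀ i, w * ξ i = -(ξ i * w)) :
    ∀ l : List (Fin n), w * (l.map ξ).prod = ((-1:ℂ)^l.length) • ((l.map ξ).prod * w) := by
  intro l
  induction l with
  | nil => simp
  | cons i t ih =>
    simp only [List.map_cons, List.prod_cons, List.length_cons]
    rw [← mul_assoc, hw i, neg_mul, mul_assoc, ih, mul_smul_comm, ← mul_assoc]
    rw [← neg_smul, pow_succ, mul_comm ((-1:ℂ)^t.length), neg_one_mul, neg_smul]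

lemma aux_perm (hξξ : ∀ i j, ξ i * ξ j = -(ξ j * ξ i)) :
    ∀ {l1 l2 : List (Fin n)}, l1.Perm l2 →
      ∃ m : ℕ, (l1.map ξ).prod = ((-1:ℂ)^m) • (l2.map ξ).prod := by
  intro l1 l2 h
  induction h with
  | nil => exact ⟨0, by simp⟩
  | cons x h ih =>
    obtain ⟨m, hm⟩ := ih
    exact ⟨m, by simp only [List.map_cons, List.prod_cons, hm, mul_smul_comm]⟩
  | swap x y l =>
    refine ⟨1, ?_⟩
    simp only [List.map_cons, List.prod_cons, ← mul_assoc, hξξ y x]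
    rw [pow_one, neg_smul, one_smul, neg_mul]
  | trans h1 h2 ih1 ih2 =>
    obtain ⟨m1, hm1⟩ := ih1
    obtain ⟨m2, hm2⟩ := ih2
    exact ⟨m1 + m2, by rw [hm1, hm2, smul_smul, pow_add]⟩

lemma aux_dup (hξ : ∀ i, ξ i ^ 2 = 0) (hξξ : ∀ i j, ξ i * ξ j = -(ξ j * ξ i))
    {l : List (Fin n)} {j : Fin n} {t : List (Fin n)} (h : l.Perm (j :: j :: t)) :
    (l.map ξ).prod = 0 := by
  obtain ⟨m, hm⟩ := aux_perm ξ hξξ h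
  rw [hm]
  simp only [List.map_cons, List.prod_cons, ← mul_assoc, ← sq, hξ j, zero_mul, smul_zero]

/-- a product of two words sharing a letter vanishes -/
lemma aux_kill2 (hξ : ∀ i, ξ i ^ 2 = 0) (hξξ : ∀ i j, ξ i * ξ j = -(ξ j * ξ i))
    {l1 l2 : List (Fin n)} {j : Fin n} (h1 : j ∈ l1) (h2 : j ∈ l2) :
    (l1.map ξ).prod * (l2.map ξ).prod = 0 := by
  rw [← List.prod_append, ← List.map_append]
  refine aux_dup ξ hξ hξξ (j := j) (t := l1.erase j ++ l2.erase j) ?_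
  have p1 : (l1 ++ l2).Perm ((j :: l1.erase j) ++ l2) :=
    (List.perm_cons_erase h1).append_right l2
  have p2 : (l1.erase j ++ l2).Perm (l1.erase j ++ (j :: l2.erase j)) :=
    (List.perm_cons_erase h2).append_left _
  have p3 : (l1.erase j ++ (j :: l2.erase j)).Perm (j :: (l1.erase j ++ l2.erase j)) :=
    List.perm_middle
  exact p1.trans (((p2.trans p3)).cons j)

end Aux

section FW
variable {n : ℕ} {A : Type*} [Ring A] [Algebra ℂ A] (ξ : Fin n → A)
  (hξ : ∀ i, ξ i ^ 2 = 0) (hξξ : ∀ i j, ξ i * ξ j = -(ξ j * ξ i))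

lemma fw_empty : finsetWord ξ (∅ : Finset (Fin n)) = 1 := by
  simp [finsetWord]

include hξξ in
/-- commuting ξ i past a word -/
lemma fw_comm (i : Fin n) (S : Finset (Fin n)) :
    ξ i * finsetWord ξ S = ((-1:ℂ)^S.card) • (finsetWord ξ S * ξ i) := by
  have := aux_comm ξ (ξ i) (fun j => hξξ i j) (S.sort (· ≤ ·))
  rwa [Finset.length_sort] at this

include hξ hξξ in
lemma fw_kill {i : Fin n} {S : Finset (Fin n)} (hi : i ∈ S) :
    ξ i * finsetWord ξ S = 0 := by
  have h : ((([i] : List (Fin n)).map ξ).prod) * ((S.sort (· ≤ ·)).map ξ).prod = 0 :=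
    aux_kill2 ξ hξ hξξ (List.mem_singleton_self i) ((Finset.mem_sort _).mpr hi)
  simpa [finsetWord] using h

include hξ hξξ in
lemma fw_fw_kill {i : Fin n} {S T : Finset (Fin n)} (hiS : i ∈ S) (hiT : i ∈ T) :
    finsetWord ξ S * finsetWord ξ T = 0 :=
  aux_kill2 ξ hξ hξξ ((Finset.mem_sort _).mpr hiS) ((Finset.mem_sort _).mpr hiT)

include hξξ in
lemma fw_insert {i : Fin n} {S : Finset (Fin n)} (hi : i ∉ S) :
    ∃ m : ℕ, ξ i * finsetWord ξ S = ((-1:ℂ)^m) • finsetWord ξ (insert i S) := by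
  have hperm : ((insert i S).sort (· ≤ ·)).Perm (i :: S.sort (· ≤ ·)) := by
    rw [← Multiset.coe_eq_coe, Finset.sort_eq, Finset.insert_val_of_notMem hi,
      ← Multiset.cons_coe, Finset.sort_eq]
  obtain ⟨m, hm⟩ := aux_perm ξ hξξ hperm
  refine ⟨m, ?_⟩
  have h2 : finsetWord ξ (insert i S) = ((-1:ℂ)^m) • (ξ i * finsetWord ξ S) := by
    simpa [finsetWord] using hm
  rw [h2, smul_smul, ← pow_add, ← two_mul, pow_mul]
  norm_num

end FW

section Main
variable {n : ℕ} {A : Type*} [Ring A] [Algebra ℂ A]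
  (K : A) (ξ : Fin n → A)
  (hK : K ^ 2 = 1) (hξ : ∀ i, ξ i ^ 2 = 0)
  (hKξ : ∀ i, K * ξ i = -(ξ i * K))
  (hξξ : ∀ i j, ξ i * ξ j = -(ξ j * ξ i))

/-- flipping a sign-smul equation -/
lemma sign_flip {M : Type*} [AddCommMonoid M] [Module ℂ M] {m : ℕ} {u v : M}
    (h : u = ((-1:ℂ)^m) • v) : v = ((-1:ℂ)^m) • u := by
  rw [h, smul_smul, ← pow_add, ← two_mul, pow_mul]
  norm_num

include hKξ in
lemma K_fw_comm (S : Finset (Fin n)) :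
    K * finsetWord ξ S = ((-1:ℂ)^S.card) • (finsetWord ξ S * K) := by
  have := aux_comm ξ K hKξ (S.sort (· ≤ ·))
  rwa [Finset.length_sort] at this

include hK in
lemma KK : K * K = 1 := by rw [← sq]; exact hK

include hKξ in
lemma xiK (i : Fin n) : ξ i * K = -(K * ξ i) := by rw [hKξ i, neg_neg]

variable (b : Module.Basis (Bool × Finset (Fin n)) ℂ A)
  (hb : ∀ p, b p = (if p.1 then K else 1) * finsetWord ξ p.2)

include hb hK in
lemma bK (p : Bool × Finset (Fin n)) : K * b p = b (!p.1, p.2) := by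
  rcases p with ⟨a, S⟩
  cases a <;> simp [hb, ← mul_assoc, KK K hK]

include hb hK hKξ in
lemma bKr (p : Bool × Finset (Fin n)) :
    b p * K = ((-1:ℂ)^p.2.card) • b (!p.1, p.2) := by
  rcases p with ⟨a, S⟩
  have hWK : finsetWord ξ S * K = ((-1:ℂ)^S.card) • (K * finsetWord ξ S) :=
    sign_flip (K_fw_comm K ξ hKξ S)
  cases a
  · simpa [hb] using hWK
  · simp only [hb, if_pos, Bool.not_true, if_neg Bool.false_ne_true, one_mul]
    rw [mul_assoc, hWK, mul_smul_comm, ← mul_assoc, KK K hK, one_mul]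

include hb hξ hKξ hξξ in
lemma bxi0 (p : Bool × Finset (Fin n)) {i : Fin n} (hi : i ∈ p.2) :
    ξ i * b p = 0 := by
  rcases p with ⟨a, S⟩
  cases a
  · simp [hb, ← mul_assoc, fw_kill ξ hξ hξξ hi]
  · simp only [hb, if_pos]
    rw [← mul_assoc, xiK K ξ hKξ i, neg_mul, mul_assoc, fw_kill ξ hξ hξξ hi,
      mul_zero, neg_zero]

include hb hKξ hξξ in
lemma bxi (p : Bool × Finset (Fin n)) {i : Fin n} (hi : i ∉ p.2) :
    ∃ m : ℕ, ξ i * b p = ((-1:ℂ)^m) • b (p.1, insert i p.2) := by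
  rcases p with ⟨a, S⟩
  obtain ⟨m, hm⟩ := fw_insert ξ hξξ hi
  cases a
  · exact ⟨m, by simpa [hb] using hm⟩
  · refine ⟨m + 1, ?_⟩
    simp only [hb, if_pos]
    rw [← mul_assoc, xiK K ξ hKξ i, neg_mul, mul_assoc, hm, mul_smul_comm,
      ← neg_smul, pow_succ, mul_comm ((-1:ℂ)^m), neg_one_mul, neg_smul]

include hb hξ hKξ hξξ in
lemma bxi0r (p : Bool × Finset (Fin n)) {i : Fin n} (hi : i ∈ p.2) :
    b p * ξ i = 0 := by
  rcases p with ⟨a, S⟩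
  have h : finsetWord ξ S * ξ i = 0 := by
    have := sign_flip (fw_comm ξ hξξ i S)
    rw [this, fw_kill ξ hξ hξξ hi, smul_zero]
  cases a <;> simp [hb, mul_assoc, h]

include hb hKξ hξξ in
lemma bxir (p : Bool × Finset (Fin n)) {i : Fin n} (hi : i ∉ p.2) :
    ∃ m : ℕ, b p * ξ i = ((-1:ℂ)^m) • b (p.1, insert i p.2) := by
  rcases p with ⟨a, S⟩
  obtain ⟨m, hm⟩ := fw_insert ξ hξξ hi
  have h : finsetWord ξ S * ξ i = ((-1:ℂ)^(S.card + m)) • finsetWord ξ (insert i S) := by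
    have h2 := sign_flip (fw_comm ξ hξξ i S)
    rw [h2, hm, smul_smul, ← pow_add]
  refine ⟨S.card + m, ?_⟩
  cases a <;> simp [hb, mul_assoc, h, mul_smul_comm]

variable (ε : A →ₐ[ℂ] ℂ) (hεK : ε K = 1) (hεξ : ∀ i, ε (ξ i) = 0)

include hεξ in
lemma eps_fw (S : Finset (Fin n)) :
    ε (finsetWord ξ S) = if S = ∅ then 1 else 0 := by
  by_cases hS : S = ∅
  · simp [hS, fw_empty]
  · rw [if_neg hS, finsetWord, map_list_prod, List.map_map]
    obtain ⟨j, hj⟩ := Finset.nonempty_iff_ne_empty.mpr hS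
    exact List.prod_eq_zero
      (List.mem_map.mpr ⟨j, (Finset.mem_sort _).mpr hj, by simp [hεξ]⟩)

include hb hεK hεξ in
lemma eps_b (p : Bool × Finset (Fin n)) :
    ε (b p) = if p.2 = ∅ then 1 else 0 := by
  rcases p with ⟨a, S⟩
  cases a <;> simp [hb, map_mul, hεK, eps_fw ξ ε hεξ]

omit K ξ in
lemma coordb (p q : Bool × Finset (Fin n)) :
    b.repr (b p) q = if p = q then 1 else 0 := by
  rw [b.repr_self]; exact Finsupp.single_apply

end Main

/-- In the Nichols Hopf algebra `K_n` (an algebra `A` with generators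
`K, ξ_1,…,ξ_n` satisfying the defining relations, with basis given by the words
`K^a ξ_{i_1}⋯ξ_{i_k}` and counit `ε(K)=1`, `ε(ξ_i)=0`): every left integral is
a scalar multiple of `(1+K)ξ_1⋯ξ_n`, every right integral is a scalar multiple
of `ξ_1⋯ξ_n(1+K)`, and `K_n` is unimodular (the spaces of left and right
integrals coincide) iff `n` is even. -/
theorem stmt2 (n : ℕ) (hn : 1 ≤ n) (A : Type*) [Ring A] [Algebra ℂ A]
    (K : A) (ξ : Fin n → A)
    (hK : K ^ 2 = 1) (hξ : ∀ i, ξ i ^ 2 = 0)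
    (hKξ : ∀ i, K * ξ i = -(ξ i * K))
    (hξξ : ∀ i j, ξ i * ξ j = -(ξ j * ξ i))
    (ε : A →ₐ[ℂ] ℂ) (hεK : ε K = 1) (hεξ : ∀ i, ε (ξ i) = 0)
    (b : Module.Basis (Bool × Finset (Fin n)) ℂ A)
    (hb : ∀ p, b p = (if p.1 then K else 1) * finsetWord ξ p.2) :
    (∀ x : A, (∀ y, y * x = ε y • x) →
        ∃ c : ℂ, x = c • ((1 + K) * finsetWord ξ Finset.univ)) ∧
      (∀ x : A, (∀ y, x * y = ε y • x) →
        ∃ c : ℂ, x = c • (finsetWord ξ Finset.univ * (1 + K))) ∧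
      ({x : A | ∀ y, y * x = ε y • x} = {x : A | ∀ y, x * y = ε y • x} ↔
        Even n) := by
  classical
  set W : Finset (Fin n) → A := finsetWord ξ with hW
  -- L and R, expressed in the basis
  have hL : (1 + K) * W Finset.univ = b (false, Finset.univ) + b (true, Finset.univ) := by
    simp [hb, add_mul]
  have hcardU : (Finset.univ : Finset (Fin n)).card = n := by simp
  have hWK : W Finset.univ * K = ((-1:ℂ)^n) • (K * W Finset.univ) := by
    have := sign_flip (K_fw_comm K ξ hKξ Finset.univ)
    rwa [hcardU] at this
  have hR : W Finset.univ * (1 + K) =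
      b (false, Finset.univ) + ((-1:ℂ)^n) • b (true, Finset.univ) := by
    rw [mul_add, mul_one, hWK]
    simp [hb]
  -- == LEFT integrals ==
  have leftPart : ∀ x : A, (∀ y, y * x = ε y • x) →
      ∃ c : ℂ, x = c • ((1 + K) * W Finset.univ) := by
    intro x hx
    have hxK : K * x = x := by rw [hx K, hεK, one_smul]
    have hxξ : ∀ i, ξ i * x = 0 := fun i => by rw [hx (ξ i), hεξ, zero_smul]
    set r := b.repr x with hr
    have h1 : ∀ a S, S ≠ Finset.univ → r (a, S) = 0 := by
      intro a S hS
      have hex : ¬ ∀ i, i ∈ S := fun h => hS (Finset.eq_univ_iff_forall.mpr h)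
      push_neg at hex
      obtain ⟨i, hi⟩ := hex
      set φ : A →ₗ[ℂ] ℂ := b.coord (a, insert i S) with hφ
      have hsum : ξ i * x = ∑ p, r p • (ξ i * b p) := by
        calc ξ i * x = ξ i * ∑ p, r p • b p := by rw [b.sum_repr]
          _ = ∑ p, r p • (ξ i * b p) := by
              rw [Finset.mul_sum]
              exact Finset.sum_congr rfl fun p _ => (mul_smul_comm _ _ _)
      have h0 : (0:ℂ) = ∑ p, r p * φ (ξ i * b p) := by
        have : φ (ξ i * x) = 0 := by rw [hxξ i, map_zero]
        rw [← this, hsum, map_sum]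
        exact Finset.sum_congr rfl fun p _ => by rw [map_smul, smul_eq_mul]
      rw [Finset.sum_eq_single (a, S)] at h0
      · obtain ⟨m, hm⟩ := bxi K ξ hKξ hξξ b hb (a, S) hi
        rw [hm, map_smul, smul_eq_mul, hφ, Module.Basis.coord_apply,
          coordb b, if_pos rfl, mul_one] at h0
        have hne : ((-1:ℂ)^m) ≠ 0 := pow_ne_zero m (by norm_num)
        rcases mul_eq_zero.mp h0.symm with h | h
        · exact h
        · exact absurd h hne
      · intro p _ hp
        by_cases hip : i ∈ p.2
        · rw [bxi0 K ξ hξ hKξ hξξ b hb p hip, map_zero, mul_zero]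
        · obtain ⟨m, hm⟩ := bxi K ξ hKξ hξξ b hb p hip
          rw [hm, map_smul, smul_eq_mul, hφ, Module.Basis.coord_apply, coordb b,
            if_neg, mul_zero, mul_zero]
          intro hEq
          apply hp
          have h2 : p.2 = S := by
            have := congrArg Prod.snd hEq
            simp only at this
            rw [← Finset.erase_insert hip, this, Finset.erase_insert hi]
          have h1' : p.1 = a := congrArg Prod.fst hEq
          exact Prod.ext h1' h2
      · intro h; exact absurd (Finset.mem_univ _) h
    have h2 : r (true, Finset.univ) = r (false, Finset.univ) := by
      set φ : A →ₗ[ℂ] ℂ := b.coord (true, Finset.univ) with hφ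
      have hsum : x = ∑ p, r p • b (!p.1, p.2) := by
        calc x = K * x := (hxK).symm
          _ = K * ∑ p, r p • b p := by rw [b.sum_repr]
          _ = ∑ p, r p • (K * b p) := by
              rw [Finset.mul_sum]
              exact Finset.sum_congr rfl fun p _ => (mul_smul_comm _ _ _)
          _ = ∑ p, r p • b (!p.1, p.2) := by
              exact Finset.sum_congr rfl fun p _ => by rw [bK K ξ hK b hb]
      have hval : φ x = ∑ p, r p * φ (b (!p.1, p.2)) := by
        conv_lhs => rw [hsum]
        rw [map_sum]
        exact Finset.sum_congr rfl fun p _ => by rw [map_smul, smul_eq_mul]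
      rw [Finset.sum_eq_single (false, Finset.univ)] at hval
      · rw [hφ] at hval
        simp only [Module.Basis.coord_apply] at hval
        rw [coordb b] at hval
        simpa using hval
      · intro p _ hp
        rw [hφ]
        simp only [Module.Basis.coord_apply]
        rw [coordb b, if_neg, mul_zero]
        intro hEq
        apply hp
        have h1' : p.1 = false := by
          have := congrArg Prod.fst hEq
          simp only at this
          cases hpa : p.1
          · rfl
          · rw [hpa] at this; simp at this
        have h2' : p.2 = Finset.univ := congrArg Prod.snd hEq
        exact Prod.ext h1' h2'
      · intro h; exact absurd (Finset.mem_univ _) h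
    refine ⟨r (false, Finset.univ), ?_⟩
    apply b.repr.injective
    refine Finsupp.ext fun q => ?_
    rw [map_smul, hL, map_add]
    rcases q with ⟨a, S⟩
    by_cases hS : S = Finset.univ
    · subst hS
      cases a <;>
        simp [coordb b, Finsupp.smul_apply, h2, ← hr]
    · rw [show (b.repr x) (a, S) = r (a, S) from rfl, h1 a S hS]
      simp only [Finsupp.smul_apply, Finsupp.add_apply]
      rw [coordb b, coordb b, if_neg, if_neg]
      · simp
      · intro h; exact hS (congrArg Prod.snd h).symm
      · intro h; exact hS (congrArg Prod.snd h).symm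
  -- == RIGHT integrals ==
  have rightPart : ∀ x : A, (∀ y, x * y = ε y • x) →
      ∃ c : ℂ, x = c • (W Finset.univ * (1 + K)) := by
    intro x hx
    have hxK : x * K = x := by rw [hx K, hεK, one_smul]
    have hxξ : ∀ i, x * ξ i = 0 := fun i => by rw [hx (ξ i), hεξ, zero_smul]
    set r := b.repr x with hr
    have h1 : ∀ a S, S ≠ Finset.univ → r (a, S) = 0 := by
      intro a S hS
      have hex : ¬ ∀ i, i ∈ S := fun h => hS (Finset.eq_univ_iff_forall.mpr h)
      push_neg at hex
      obtain ⟨i, hi⟩ := hex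
      set φ : A →ₗ[ℂ] ℂ := b.coord (a, insert i S) with hφ
      have hsum : x * ξ i = ∑ p, r p • (b p * ξ i) := by
        calc x * ξ i = (∑ p, r p • b p) * ξ i := by rw [b.sum_repr]
          _ = ∑ p, r p • (b p * ξ i) := by
              rw [Finset.sum_mul]
              exact Finset.sum_congr rfl fun p _ => (smul_mul_assoc _ _ _)
      have h0 : (0:ℂ) = ∑ p, r p * φ (b p * ξ i) := by
        have : φ (x * ξ i) = 0 := by rw [hxξ i, map_zero]
        rw [← this, hsum, map_sum]
        exact Finset.sum_congr rfl fun p _ => by rw [map_smul, smul_eq_mul]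
      rw [Finset.sum_eq_single (a, S)] at h0
      · obtain ⟨m, hm⟩ := bxir K ξ hKξ hξξ b hb (a, S) hi
        rw [hm, map_smul, smul_eq_mul, hφ, Module.Basis.coord_apply,
          coordb b, if_pos rfl, mul_one] at h0
        have hne : ((-1:ℂ)^m) ≠ 0 := pow_ne_zero m (by norm_num)
        rcases mul_eq_zero.mp h0.symm with h | h
        · exact h
        · exact absurd h hne
      · intro p _ hp
        by_cases hip : i ∈ p.2
        · rw [bxi0r K ξ hξ hKξ hξξ b hb p hip, map_zero, mul_zero]
        · obtain ⟨m, hm⟩ := bxir K ξ hKξ hξξ b hb p hip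
          rw [hm, map_smul, smul_eq_mul, hφ, Module.Basis.coord_apply, coordb b,
            if_neg, mul_zero, mul_zero]
          intro hEq
          apply hp
          have h2 : p.2 = S := by
            have := congrArg Prod.snd hEq
            simp only at this
            rw [← Finset.erase_insert hip, this, Finset.erase_insert hi]
          have h1' : p.1 = a := congrArg Prod.fst hEq
          exact Prod.ext h1' h2
      · intro h; exact absurd (Finset.mem_univ _) h
    have h2 : r (true, Finset.univ) = ((-1:ℂ)^n) * r (false, Finset.univ) := by
      set φ : A →ₗ[ℂ] ℂ := b.coord (true, Finset.univ) with hφ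
      have hsum : x = ∑ p, r p • (((-1:ℂ)^p.2.card) • b (!p.1, p.2)) := by
        calc x = x * K := (hxK).symm
          _ = (∑ p, r p • b p) * K := by rw [b.sum_repr]
          _ = ∑ p, r p • (b p * K) := by
              rw [Finset.sum_mul]
              exact Finset.sum_congr rfl fun p _ => (smul_mul_assoc _ _ _)
          _ = ∑ p, r p • (((-1:ℂ)^p.2.card) • b (!p.1, p.2)) := by
              exact Finset.sum_congr rfl fun p _ => by rw [bKr K ξ hK hKξ b hb]
      have hval : φ x = ∑ p, r p * (((-1:ℂ)^p.2.card) * φ (b (!p.1, p.2))) := by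
        conv_lhs => rw [hsum]
        rw [map_sum]
        exact Finset.sum_congr rfl fun p _ => by
          rw [map_smul, smul_eq_mul, map_smul, smul_eq_mul]
      rw [Finset.sum_eq_single (false, Finset.univ)] at hval
      · rw [hφ] at hval
        simp only [Module.Basis.coord_apply] at hval
        rw [coordb b] at hval
        simp only [hcardU] at hval
        rw [show (b.repr x) (true, Finset.univ) = r (true, Finset.univ) from rfl] at hval
        rw [hval]
        simp [mul_comm]
      · intro p _ hp
        rw [hφ]
        simp only [Module.Basis.coord_apply]
        rw [coordb b, if_neg, mul_zero, mul_zero]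
        intro hEq
        apply hp
        have h1' : p.1 = false := by
          have := congrArg Prod.fst hEq
          simp only at this
          cases hpa : p.1
          · rfl
          · rw [hpa] at this; simp at this
        have h2' : p.2 = Finset.univ := congrArg Prod.snd hEq
        exact Prod.ext h1' h2'
      · intro h; exact absurd (Finset.mem_univ _) h
    refine ⟨r (false, Finset.univ), ?_⟩
    apply b.repr.injective
    refine Finsupp.ext fun q => ?_
    rw [map_smul, hR, map_add, map_smul]
    rcases q with ⟨a, S⟩
    by_cases hS : S = Finset.univ
    · subst hS
      cases a
      · simp [coordb b, ← hr]
      · simp only [Finsupp.smul_apply, Finsupp.add_apply, coordb b]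
        rw [show (b.repr x) (true, Finset.univ) = r (true, Finset.univ) from rfl, h2]
        simp [smul_eq_mul, mul_comm]
    · rw [show (b.repr x) (a, S) = r (a, S) from rfl, h1 a S hS]
      simp only [Finsupp.smul_apply, Finsupp.add_apply, coordb b]
      rw [if_neg, if_neg]
      · simp
      · intro h; exact hS (congrArg Prod.snd h).symm
      · intro h; exact hS (congrArg Prod.snd h).symm
  -- == part 3 ==
  have hWe : W ∅ = (1:A) := fw_empty ξ
  have hKL : K * ((1 + K) * W Finset.univ) = (1 + K) * W Finset.univ := by
    rw [← mul_assoc, mul_add, mul_one, KK K hK, add_comm]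
  have hRK : (W Finset.univ * (1 + K)) * K = W Finset.univ * (1 + K) := by
    rw [mul_assoc, add_mul, one_mul, KK K hK, add_comm]
  have bL : ∀ p : Bool × Finset (Fin n),
      b p * ((1 + K) * W Finset.univ) = ε (b p) • ((1 + K) * W Finset.univ) := by
    rintro ⟨a, S⟩
    rw [eps_b K ξ b hb ε hεK hεξ]
    by_cases hS : S = ∅
    · subst hS
      rw [if_pos rfl, one_smul]
      cases a
      · simp [hb, hWe]
      · rw [hb]
        simp only [if_pos]
        rw [hWe, mul_one, hKL]
    · rw [if_neg hS, zero_smul]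
      obtain ⟨j, hj⟩ := Finset.nonempty_iff_ne_empty.mpr hS
      have hkill : W S * W Finset.univ = 0 := fw_fw_kill ξ hξ hξξ hj (Finset.mem_univ j)
      have hWSK : W S * K = ((-1:ℂ)^S.card) • (K * W S) := sign_flip (K_fw_comm K ξ hKξ S)
      have hWS : W S * ((1 + K) * W Finset.univ) = 0 := by
        rw [add_mul, one_mul, mul_add, hkill, ← mul_assoc, hWSK, smul_mul_assoc,
          mul_assoc, hkill, mul_zero, smul_zero, add_zero]
      cases a <;> simp [hb, mul_assoc, hWS]
  have Rb : ∀ p : Bool × Finset (Fin n),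
      (W Finset.univ * (1 + K)) * b p = ε (b p) • (W Finset.univ * (1 + K)) := by
    rintro ⟨a, S⟩
    rw [eps_b K ξ b hb ε hεK hεξ]
    by_cases hS : S = ∅
    · subst hS
      rw [if_pos rfl, one_smul]
      cases a
      · simp [hb, hWe]
      · rw [hb]
        simp only [if_pos]
        rw [hWe, mul_one, hRK]
    · rw [if_neg hS, zero_smul]
      obtain ⟨j, hj⟩ := Finset.nonempty_iff_ne_empty.mpr hS
      have hkill : W Finset.univ * W S = 0 := fw_fw_kill ξ hξ hξξ (Finset.mem_univ j) hj
      have hKWS : K * W S = ((-1:ℂ)^S.card) • (W S * K) := K_fw_comm K ξ hKξ S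
      have hWS : (W Finset.univ * (1 + K)) * W S = 0 := by
        rw [mul_assoc, add_mul, one_mul, mul_add, hkill, hKWS, mul_smul_comm,
          ← mul_assoc, hkill, zero_mul, smul_zero, add_zero]
      cases a
      · rw [hb]
        simpa using hWS
      · rw [hb]
        simp only [if_pos]
        rw [← mul_assoc, hRK]
        exact hWS
  have Lleft : ∀ y : A, y * ((1 + K) * W Finset.univ) = ε y • ((1 + K) * W Finset.univ) := by
    intro y
    have hεy : ε y = ∑ q, b.repr y q * ε (b q) := by
      conv_lhs => rw [← b.sum_repr y]
      rw [map_sum]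
      exact Finset.sum_congr rfl fun q _ => by rw [map_smul, smul_eq_mul]
    calc y * ((1 + K) * W Finset.univ)
        = (∑ q, b.repr y q • b q) * ((1 + K) * W Finset.univ) := by rw [b.sum_repr]
      _ = ∑ q, b.repr y q • (b q * ((1 + K) * W Finset.univ)) := by
          rw [Finset.sum_mul]
          exact Finset.sum_congr rfl fun q _ => smul_mul_assoc _ _ _
      _ = ∑ q, (b.repr y q * ε (b q)) • ((1 + K) * W Finset.univ) :=
          Finset.sum_congr rfl fun q _ => by rw [bL q, smul_smul]
      _ = ε y • ((1 + K) * W Finset.univ) := by rw [hεy, ← Finset.sum_smul]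
  have Rright : ∀ y : A, (W Finset.univ * (1 + K)) * y = ε y • (W Finset.univ * (1 + K)) := by
    intro y
    have hεy : ε y = ∑ q, b.repr y q * ε (b q) := by
      conv_lhs => rw [← b.sum_repr y]
      rw [map_sum]
      exact Finset.sum_congr rfl fun q _ => by rw [map_smul, smul_eq_mul]
    calc (W Finset.univ * (1 + K)) * y
        = (W Finset.univ * (1 + K)) * (∑ q, b.repr y q • b q) := by rw [b.sum_repr]
      _ = ∑ q, b.repr y q • ((W Finset.univ * (1 + K)) * b q) := by
          rw [Finset.mul_sum]
          exact Finset.sum_congr rfl fun q _ => mul_smul_comm _ _ _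
      _ = ∑ q, (b.repr y q * ε (b q)) • (W Finset.univ * (1 + K)) :=
          Finset.sum_congr rfl fun q _ => by rw [Rb q, smul_smul]
      _ = ε y • (W Finset.univ * (1 + K)) := by rw [hεy, ← Finset.sum_smul]
  refine ⟨leftPart, rightPart, ?_⟩
  constructor
  · intro hEq
    by_contra hodd
    rw [Nat.not_even_iff_odd] at hodd
    have hLmem : ((1 + K) * W Finset.univ) ∈ {x : A | ∀ y, y * x = ε y • x} := Lleft
    rw [hEq] at hLmem
    obtain ⟨c, hc⟩ := rightPart _ hLmem
    have e1 := congrArg (fun z => b.repr z (false, Finset.univ)) hc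
    have e2 := congrArg (fun z => b.repr z (true, Finset.univ)) hc
    simp only [hL, hR, map_add, map_smul, Finsupp.add_apply, Finsupp.smul_apply,
      coordb b, hodd.neg_one_pow, Prod.mk.injEq] at e1 e2
    simp only [smul_eq_mul] at e1 e2
    norm_num at e1 e2
    rw [← e1] at e2
    norm_num at e2
  · intro hev
    have hLR : (1 + K) * W Finset.univ = W Finset.univ * (1 + K) := by
      have h : K * W Finset.univ = W Finset.univ * K := by
        have := K_fw_comm K ξ hKξ (Finset.univ : Finset (Fin n))
        rw [hcardU, hev.neg_one_pow, one_smul] at this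
        exact this
      rw [add_mul, mul_add, one_mul, mul_one, h]
    ext x
    simp only [Set.mem_setOf_eq]
    constructor
    · intro hx y
      obtain ⟨c, hc⟩ := leftPart x hx
      rw [hc, hLR, smul_mul_assoc, Rright y, smul_comm]
    · intro hx y
      obtain ⟨c, hc⟩ := rightPart x hx
      rw [hc, ← hLR, mul_smul_comm, Lleft y, smul_comm]
end

section
/- The center of the Nichols Hopf algebra K_n is spanned by the words in the ξ_i of even length, together with Kξ_1⋯ξ_n when n is even; in particular, dim Z(K_n) = 2^{n−1} + 1 if n is even and 2^{n−1} if n is odd. -/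
section Aux

variable {n : ℕ} {A : Type*} [Ring A] {K : A} {ξ : Fin n → A}

lemma K_mul_listProd (hKξ : ∀ i, K * ξ i = -(ξ i * K)) (l : List (Fin n)) :
    K * (l.map ξ).prod = ((-1 : ℤ) ^ l.length) • ((l.map ξ).prod * K) := by
  induction l with
  | nil => simp
  | cons a t ih =>
      rw [List.map_cons, List.prod_cons, ← mul_assoc, hKξ a, List.length_cons,
        neg_mul, mul_assoc, ih, mul_smul_comm, pow_succ]
      simp [mul_smul, mul_assoc]

lemma xi_mul_listProd (hξξ : ∀ i j, ξ i * ξ j = -(ξ j * ξ i)) (i : Fin n)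
    (l : List (Fin n)) :
    ξ i * (l.map ξ).prod = ((-1 : ℤ) ^ l.length) • ((l.map ξ).prod * ξ i) := by
  induction l with
  | nil => simp
  | cons a t ih =>
      rw [List.map_cons, List.prod_cons, ← mul_assoc, hξξ i a, List.length_cons,
        neg_mul, mul_assoc, ih, mul_smul_comm, pow_succ]
      simp [mul_smul, mul_assoc]

lemma listProd_mul_xi (hξ : ∀ i, ξ i ^ 2 = 0) (hξξ : ∀ i j, ξ i * ξ j = -(ξ j * ξ i))
    {i : Fin n} {l : List (Fin n)} (hil : i ∈ l) :
    (l.map ξ).prod * ξ i = 0 := by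
  induction l with
  | nil => simp at hil
  | cons a t ih =>
      rcases List.mem_cons.mp hil with h | h
      · subst h
        rw [List.map_cons, List.prod_cons, mul_assoc, ← mul_assoc,
          xi_mul_listProd hξξ i t, smul_mul_assoc, mul_assoc, ← sq, hξ]
        simp
      · rw [List.map_cons, List.prod_cons, mul_assoc, ih h, mul_zero]

lemma perm_sign (hξξ : ∀ i j, ξ i * ξ j = -(ξ j * ξ i))
    {l l' : List (Fin n)} (h : l.Perm l') :
    ∃ ε : ℤ, (ε = 1 ∨ ε = -1) ∧ (l.map ξ).prod = ε • (l'.map ξ).prod := by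
  induction h with
  | nil => exact ⟨1, Or.inl rfl, by simp⟩
  | cons x h ih =>
      obtain ⟨ε, hε, he⟩ := ih
      exact ⟨ε, hε, by
        rw [List.map_cons, List.prod_cons, List.map_cons, List.prod_cons, he,
          mul_smul_comm]⟩
  | swap x y l =>
      refine ⟨-1, Or.inr rfl, ?_⟩
      simp only [List.map_cons, List.prod_cons, ← mul_assoc, hξξ y x]
      simp
  | trans h1 h2 ih1 ih2 =>
      obtain ⟨ε1, hε1, he1⟩ := ih1
      obtain ⟨ε2, hε2, he2⟩ := ih2
      refine ⟨ε1 * ε2, ?_, by rw [he1, he2, smul_smul]⟩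
      rcases hε1 with h | h <;> rcases hε2 with h' | h' <;> simp [h, h']

end Aux
section Aux2

variable {n : ℕ} {A : Type*} [Ring A] {K : A} {ξ : Fin n → A}

lemma K_mul_word (hKξ : ∀ i, K * ξ i = -(ξ i * K)) (s : Finset (Fin n)) :
    K * finsetWord ξ s = ((-1 : ℤ) ^ s.card) • (finsetWord ξ s * K) := by
  rw [finsetWord, K_mul_listProd hKξ, Finset.length_sort]

lemma xi_mul_word (hξξ : ∀ i j, ξ i * ξ j = -(ξ j * ξ i)) (i : Fin n)
    (s : Finset (Fin n)) :
    ξ i * finsetWord ξ s = ((-1 : ℤ) ^ s.card) • (finsetWord ξ s * ξ i) := by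
  rw [finsetWord, xi_mul_listProd hξξ, Finset.length_sort]

lemma word_mul_xi_zero (hξ : ∀ i, ξ i ^ 2 = 0)
    (hξξ : ∀ i j, ξ i * ξ j = -(ξ j * ξ i)) {i : Fin n} {s : Finset (Fin n)}
    (his : i ∈ s) : finsetWord ξ s * ξ i = 0 :=
  listProd_mul_xi hξ hξξ ((Finset.mem_sort _).2 his)

lemma xi_mul_word_zero (hξ : ∀ i, ξ i ^ 2 = 0)
    (hξξ : ∀ i j, ξ i * ξ j = -(ξ j * ξ i)) {i : Fin n} {s : Finset (Fin n)}
    (his : i ∈ s) : ξ i * finsetWord ξ s = 0 := by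
  rw [xi_mul_word hξξ, word_mul_xi_zero hξ hξξ his, smul_zero]

lemma word_mul_xi_insert (hξξ : ∀ i j, ξ i * ξ j = -(ξ j * ξ i)) {i : Fin n}
    {s : Finset (Fin n)} (his : i ∉ s) :
    ∃ ε : ℤ, (ε = 1 ∨ ε = -1) ∧
      finsetWord ξ s * ξ i = ε • finsetWord ξ (insert i s) := by
  have hperm : (s.sort (· ≤ ·) ++ [i]).Perm ((insert i s).sort (· ≤ ·)) := by
    refine (List.perm_append_comm (l₁ := s.sort (· ≤ ·)) (l₂ := [i])).trans ?_
    refine List.Perm.trans ?_ (Finset.sort_perm_toList _ (· ≤ ·)).symm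
    refine List.Perm.trans ?_ (Finset.toList_insert his).symm
    simpa using (Finset.sort_perm_toList s (· ≤ ·)).cons i
  obtain ⟨ε, hε, he⟩ := perm_sign hξξ hperm
  refine ⟨ε, hε, ?_⟩
  rw [finsetWord, finsetWord, ← he, List.map_append, List.prod_append]
  simp

end Aux2
section Aux3

lemma repr_extract {ι M : Type*} [Fintype ι] [DecidableEq ι] [AddCommGroup M]
    [Module ℂ M] (b : Module.Basis ι ℂ M) (D : M →ₗ[ℂ] M) (P : ι → Prop) (σ : ι → ι)
    (x : M)
    (hD : ∀ p, P p → ∃ g : ℂ, D (b p) = g • b (σ p))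
    (hP : ∀ p, ¬ P p → b.repr x p = 0)
    (hDx : D x = 0) (p₀ : ι) (g₀ : ℂ) (hg₀ : g₀ ≠ 0)
    (hD₀ : D (b p₀) = g₀ • b (σ p₀))
    (hinj : ∀ p, P p → σ p = σ p₀ → p = p₀) :
    b.repr x p₀ = 0 := by
  classical
  have hx : ∑ p, b.repr x p • b p = x := b.sum_repr x
  have h2 : (0 : ℂ) = (b.repr (D x)) (σ p₀) := by rw [hDx]; simp
  rw [← hx, map_sum] at h2
  simp only [map_smul] at h2
  rw [map_sum] at h2
  simp only [Finsupp.smul_apply, Finsupp.coe_finset_sum, Finset.sum_apply] at h2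
  rw [Finset.sum_eq_single p₀ ?h1 ?h2] at h2
  · simp only [map_smul, Finsupp.smul_apply, hD₀, Module.Basis.repr_self,
      Finsupp.single_eq_same, smul_eq_mul, mul_one] at h2
    have : b.repr x p₀ * g₀ = 0 := h2.symm
    exact (mul_eq_zero.mp this).resolve_right hg₀
  case h1 =>
    intro p _ hne
    by_cases hp : P p
    · obtain ⟨g, hg⟩ := hD p hp
      have hσ : σ p ≠ σ p₀ := fun h => hne (hinj p hp h)
      simp [hg, Finsupp.single_apply, hσ]
    · rw [hP p hp]
      simp
  case h2 => intro h; exact absurd (Finset.mem_univ p₀) h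

end Aux3
section Aux4

lemma card_even_subsets (n : ℕ) (hn : 1 ≤ n) :
    (Finset.univ.filter fun s : Finset (Fin n) => Even s.card).card = 2 ^ (n - 1) := by
  classical
  set i0 : Fin n := ⟨0, hn⟩ with hi0
  have key : (Finset.univ.filter fun s : Finset (Fin n) => Even s.card).card =
      (Finset.univ.filter fun s : Finset (Fin n) => ¬ Even s.card).card := by
    apply Finset.card_bij'
      (i := fun s _ => if i0 ∈ s then s.erase i0 else insert i0 s)
      (j := fun s _ => if i0 ∈ s then s.erase i0 else insert i0 s)
    · intro s _
      by_cases h : i0 ∈ s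
      · rw [if_pos h, if_neg (Finset.notMem_erase i0 s), Finset.insert_erase h]
      · rw [if_neg h, if_pos (Finset.mem_insert_self i0 s), Finset.erase_insert h]
    · intro s _
      by_cases h : i0 ∈ s
      · rw [if_pos h, if_neg (Finset.notMem_erase i0 s), Finset.insert_erase h]
      · rw [if_neg h, if_pos (Finset.mem_insert_self i0 s), Finset.erase_insert h]
    · intro s hs
      rw [Finset.mem_filter] at hs ⊢
      refine ⟨Finset.mem_univ _, ?_⟩
      by_cases h : i0 ∈ s
      · rw [if_pos h]
        have := Finset.card_erase_add_one h
        intro hcon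
        rw [← this, Nat.even_add_one] at hs
        exact hs.2 hcon
      · rw [if_neg h]
        rw [Finset.card_insert_of_notMem h, Nat.even_add_one]
        exact fun hcon => hcon hs.2
    · intro s hs
      rw [Finset.mem_filter] at hs ⊢
      refine ⟨Finset.mem_univ _, ?_⟩
      by_cases h : i0 ∈ s
      · rw [if_pos h]
        rw [← Finset.card_erase_add_one h, Nat.even_add_one, not_not] at hs
        exact hs.2
      · rw [if_neg h]
        rw [Finset.card_insert_of_notMem h, Nat.even_add_one]
        exact hs.2
  have htot := Finset.card_filter_add_card_filter_not
    (s := (Finset.univ : Finset (Finset (Fin n))))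
    (p := fun s => Even s.card)
  rw [Finset.card_univ, Fintype.card_finset, Fintype.card_fin] at htot
  have h2n : 2 ^ n = 2 * 2 ^ (n - 1) := by
    rw [← pow_succ']
    congr 1
    omega
  omega

end Aux4

/-- The center of the Nichols Hopf algebra `K_n` is spanned by the words in the
`ξ_i` of even length, together with `Kξ_1⋯ξ_n` when `n` is even; in particular
`dim Z(K_n) = 2^{n-1} + 1` if `n` is even and `2^{n-1}` if `n` is odd. -/
theorem stmt3 (n : ℕ) (hn : 1 ≤ n) (A : Type*) [Ring A] [Algebra ℂ A]
    (K : A) (ξ : Fin n → A)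
    (hK : K ^ 2 = 1) (hξ : ∀ i, ξ i ^ 2 = 0)
    (hKξ : ∀ i, K * ξ i = -(ξ i * K))
    (hξξ : ∀ i j, ξ i * ξ j = -(ξ j * ξ i))
    (b : Module.Basis (Bool × Finset (Fin n)) ℂ A)
    (hb : ∀ p, b p = (if p.1 then K else 1) * finsetWord ξ p.2) :
    Subalgebra.toSubmodule (Subalgebra.center ℂ A) =
      Submodule.span ℂ
        ({x : A | ∃ s : Finset (Fin n), Even s.card ∧ x = finsetWord ξ s} ∪
          (if Even n then {K * finsetWord ξ Finset.univ} else ∅)) ∧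
      Module.finrank ℂ (Subalgebra.center ℂ A) =
        (if Even n then 2 ^ (n - 1) + 1 else 2 ^ (n - 1)) := by
  classical
  have hKK : K * K = 1 := by rw [← sq, hK]
  have hb0 : ∀ s, b (false, s) = finsetWord ξ s := by
    intro s; rw [hb]; simp
  have hb1 : ∀ s, b (true, s) = K * finsetWord ξ s := by
    intro s; rw [hb]; simp
  have hξK : ∀ i, ξ i * K = -(K * ξ i) := fun i => by rw [hKξ i, neg_neg]
  -- ℂ-scalar versions of the commutation lemmas
  have hKw : ∀ s : Finset (Fin n),
      K * finsetWord ξ s = ((-1 : ℂ) ^ s.card) • (finsetWord ξ s * K) := by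
    intro s
    rw [K_mul_word hKξ s, ← Int.cast_smul_eq_zsmul ℂ]
    norm_num
  have hxw : ∀ (i : Fin n) (s : Finset (Fin n)),
      ξ i * finsetWord ξ s = ((-1 : ℂ) ^ s.card) • (finsetWord ξ s * ξ i) := by
    intro i s
    rw [xi_mul_word hξξ i s, ← Int.cast_smul_eq_zsmul ℂ]
    norm_num
  have hsq1 : ∀ s : Finset (Fin n), ((-1 : ℂ) ^ s.card) * ((-1 : ℂ) ^ s.card) = 1 := by
    intro s
    rw [← pow_add]
    exact Even.neg_one_pow ⟨s.card, rfl⟩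
  have hwK : ∀ s : Finset (Fin n),
      finsetWord ξ s * K = ((-1 : ℂ) ^ s.card) • (K * finsetWord ξ s) := by
    intro s
    rw [hKw s, smul_smul, hsq1, one_smul]
  have hwx : ∀ (i : Fin n) (s : Finset (Fin n)),
      finsetWord ξ s * ξ i = ((-1 : ℂ) ^ s.card) • (ξ i * finsetWord ξ s) := by
    intro i s
    rw [hxw i s, smul_smul, hsq1, one_smul]
  -- criterion for centrality
  have central_of : ∀ x : A, K * x = x * K → (∀ i, ξ i * x = x * ξ i) →
      x ∈ Subalgebra.center ℂ A := by
    intro x h1 h2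
    rw [Subalgebra.mem_center_iff]
    have hl : ∀ l : List (Fin n), (l.map ξ).prod * x = x * (l.map ξ).prod := by
      intro l
      induction l with
      | nil => simp
      | cons a t ih =>
          rw [List.map_cons, List.prod_cons, mul_assoc, ih, ← mul_assoc,
            h2 a, mul_assoc]
    have hbp : ∀ p, b p * x = x * b p := by
      rintro ⟨ε, s⟩
      cases ε
      · rw [hb0, finsetWord, hl]
      · rw [hb1, finsetWord, mul_assoc, hl, ← mul_assoc, h1, mul_assoc]
    intro a
    have ha : a ∈ Submodule.span ℂ (Set.range b) := by
      rw [b.span_eq]; exact Submodule.mem_top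
    induction ha using Submodule.span_induction with
    | mem y hy => obtain ⟨p, rfl⟩ := hy; exact hbp p
    | zero => simp
    | add y z _ _ hy hz => rw [add_mul, mul_add, hy, hz]
    | smul c y _ hy => rw [smul_mul_assoc, mul_smul_comm, hy]
  set S : Set A := {x | ∃ s : Finset (Fin n), Even s.card ∧ x = finsetWord ξ s} ∪
      (if Even n then {K * finsetWord ξ Finset.univ} else ∅) with hS
  -- span S ≤ center
  have hspan_le : Submodule.span ℂ S ≤
      Subalgebra.toSubmodule (Subalgebra.center ℂ A) := by
    rw [Submodule.span_le]
    rintro x (⟨s, hs, rfl⟩ | hx)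
    · refine central_of _ ?_ ?_
      · rw [hKw, Even.neg_one_pow hs, one_smul]
      · intro i
        by_cases his : i ∈ s
        · rw [xi_mul_word_zero hξ hξξ his, word_mul_xi_zero hξ hξξ his]
        · rw [hxw, Even.neg_one_pow hs, one_smul]
    · by_cases hEn : Even n
      · rw [if_pos hEn, Set.mem_singleton_iff] at hx
        subst hx
        have hcu : (Finset.univ : Finset (Fin n)).card = n := by
          rw [Finset.card_univ, Fintype.card_fin]
        refine central_of _ ?_ ?_
        · rw [← mul_assoc, hKK, one_mul, mul_assoc, hwK, hcu,
            Even.neg_one_pow hEn, one_smul, ← mul_assoc, hKK, one_mul]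
        · intro i
          have hmem : i ∈ (Finset.univ : Finset (Fin n)) := Finset.mem_univ i
          rw [← mul_assoc, hξK, neg_mul, mul_assoc,
            xi_mul_word_zero hξ hξξ hmem, mul_zero, neg_zero, mul_assoc,
            word_mul_xi_zero hξ hξξ hmem, mul_zero]
      · rw [if_neg hEn] at hx
        exact hx.elim
  -- center ≤ span S
  have hcenter_le : Subalgebra.toSubmodule (Subalgebra.center ℂ A) ≤
      Submodule.span ℂ S := by
    intro x hx
    rw [Subalgebra.mem_toSubmodule, Subalgebra.mem_center_iff] at hx
    -- odd coefficients vanish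
    set DK : A →ₗ[ℂ] A := LinearMap.mulLeft ℂ K - LinearMap.mulRight ℂ K with hDK
    have hDKx : DK x = 0 := by
      simp only [hDK, LinearMap.sub_apply, LinearMap.mulLeft_apply,
        LinearMap.mulRight_apply, hx K, sub_self]
    have hDKb : ∀ p : Bool × Finset (Fin n),
        DK (b p) = ((1 : ℂ) - (-1 : ℂ) ^ p.2.card) • b (!p.1, p.2) := by
      rintro ⟨ε, s⟩
      cases ε
      · simp only [hDK, LinearMap.sub_apply, LinearMap.mulLeft_apply,
          LinearMap.mulRight_apply, hb0, Bool.not_false, hb1]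
        rw [hwK s, sub_smul, one_smul]
      · simp only [hDK, LinearMap.sub_apply, LinearMap.mulLeft_apply,
          LinearMap.mulRight_apply, hb1, Bool.not_true, hb0]
        rw [← mul_assoc, hKK, one_mul, mul_assoc, hwK s, mul_smul_comm,
          ← mul_assoc, hKK, one_mul, sub_smul, one_smul]
    have hodd : ∀ p : Bool × Finset (Fin n), ¬ Even p.2.card → b.repr x p = 0 := by
      intro p hp
      refine repr_extract b DK (fun _ => True) (fun q => (!q.1, q.2)) x
        (fun q _ => ⟨_, hDKb q⟩) (fun q hq => absurd trivial hq) hDKx p _ ?_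
        (hDKb p) ?_
      · rw [Odd.neg_one_pow (Nat.not_even_iff_odd.mp hp)]
        norm_num
      · rintro ⟨ε, s⟩ _ hq
        rw [Prod.mk.injEq] at hq
        rw [Prod.ext_iff]
        exact ⟨Bool.not_inj hq.1, hq.2⟩
    -- kill (true, s) for s ≠ univ
    have hker : ∀ s : Finset (Fin n), Even s.card → ∀ i, i ∉ s →
        b.repr x (true, s) = 0 := by
      intro s hs i his
      set Di : A →ₗ[ℂ] A := LinearMap.mulLeft ℂ (ξ i) - LinearMap.mulRight ℂ (ξ i)
        with hDi
      have hDix : Di x = 0 := by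
        simp only [hDi, LinearMap.sub_apply, LinearMap.mulLeft_apply,
          LinearMap.mulRight_apply, hx (ξ i), sub_self]
      set σ : Bool × Finset (Fin n) → Bool × Finset (Fin n) :=
        fun q => (q.1, if q.1 = true ∧ i ∉ q.2 then insert i q.2 else q.2) with hσ
      have hDib : ∀ q : Bool × Finset (Fin n), Even q.2.card →
          ∃ g : ℂ, Di (b q) = g • b (σ q) := by
        rintro ⟨ε, t⟩ ht
        cases ε
        · refine ⟨0, ?_⟩
          simp only [hDi, LinearMap.sub_apply, LinearMap.mulLeft_apply,
            LinearMap.mulRight_apply, hb0, zero_smul]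
          rw [hxw i t, Even.neg_one_pow ht, one_smul, sub_self]
        · by_cases hit : i ∈ t
          · refine ⟨0, ?_⟩
            simp only [hDi, LinearMap.sub_apply, LinearMap.mulLeft_apply,
              LinearMap.mulRight_apply, hb1, zero_smul]
            rw [← mul_assoc, hξK, neg_mul, mul_assoc,
              xi_mul_word_zero hξ hξξ hit, mul_zero, neg_zero, mul_assoc,
              word_mul_xi_zero hξ hξξ hit, mul_zero, sub_self]
          · obtain ⟨e, he, hee⟩ := word_mul_xi_insert hξξ hit
            refine ⟨(-2 : ℂ) * (e : ℂ), ?_⟩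
            have hσq : σ (true, t) = (true, insert i t) := by
              simp [hσ, hit]
            rw [hσq]
            simp only [hDi, LinearMap.sub_apply, LinearMap.mulLeft_apply,
              LinearMap.mulRight_apply, hb1]
            rw [← mul_assoc, hξK, neg_mul, mul_assoc, hxw i t,
              Even.neg_one_pow ht, one_smul, hee, mul_assoc, hee]
            rw [← Int.cast_smul_eq_zsmul ℂ e, mul_smul_comm, ← neg_smul, ← sub_smul]
            congr 1
            ring
      obtain ⟨e, he, hee⟩ := word_mul_xi_insert hξξ his
      have hD₀ : Di (b (true, s)) = ((-2 : ℂ) * (e : ℂ)) • b (σ (true, s)) := by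
        have hσq : σ (true, s) = (true, insert i s) := by simp [hσ, his]
        rw [hσq]
        simp only [hDi, LinearMap.sub_apply, LinearMap.mulLeft_apply,
          LinearMap.mulRight_apply, hb1]
        rw [← mul_assoc, hξK, neg_mul, mul_assoc, hxw i s,
          Even.neg_one_pow hs, one_smul, hee, mul_assoc, hee]
        rw [← Int.cast_smul_eq_zsmul ℂ e, mul_smul_comm, ← neg_smul, ← sub_smul]
        congr 1
        ring
      refine repr_extract b Di (fun q => Even q.2.card) σ x hDib hodd hDix
        (true, s) _ ?_ hD₀ ?_
      · rcases he with h | h <;> rw [h] <;> norm_num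
      · rintro ⟨ε, t⟩ ht hq
        have hσs : σ (true, s) = (true, insert i s) := by simp [hσ, his]
        rw [hσs, hσ] at hq
        simp only [Prod.mk.injEq] at hq
        obtain ⟨h1, h2⟩ := hq
        subst h1
        by_cases hit : i ∈ t
        · rw [if_neg (by simp [hit])] at h2
          exfalso
          rw [h2, Finset.card_insert_of_notMem his, Nat.even_add_one] at ht
          exact ht hs
        · rw [if_pos ⟨rfl, hit⟩] at h2
          have : t = s := by
            have := congrArg (fun u => Finset.erase u i) h2
            simpa [Finset.erase_insert hit, Finset.erase_insert his] using this
          rw [this]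
    -- conclude membership in the span
    have hxs : x = ∑ p, b.repr x p • b p := (b.sum_repr x).symm
    rw [hxs]
    refine Submodule.sum_mem _ ?_
    rintro ⟨ε, s⟩ _
    by_cases hc : b.repr x (ε, s) = 0
    · rw [hc, zero_smul]; exact Submodule.zero_mem _
    · refine Submodule.smul_mem _ _ (Submodule.subset_span ?_)
      have hev : Even s.card := by
        by_contra h
        exact hc (hodd (ε, s) h)
      cases ε
      · exact Or.inl ⟨s, hev, hb0 s⟩
      · have hsu : s = Finset.univ := by
          by_contra hne
          obtain ⟨i, hi⟩ : ∃ i, i ∉ s := by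
            by_contra hall
            push_neg at hall
            exact hne (Finset.eq_univ_iff_forall.mpr hall)
          exact hc (hker s hev i hi)
        subst hsu
        have hEn : Even n := by
          rwa [Finset.card_univ, Fintype.card_fin] at hev
        right
        rw [if_pos hEn]
        exact hb1 _
  have heq : Subalgebra.toSubmodule (Subalgebra.center ℂ A) = Submodule.span ℂ S :=
    le_antisymm hcenter_le hspan_le
  refine ⟨heq, ?_⟩
  -- dimension count
  set T : Finset (Bool × Finset (Fin n)) := Finset.univ.filter
    (fun p => (p.1 = false ∧ Even p.2.card) ∨
      (p.1 = true ∧ p.2 = Finset.univ ∧ Even n)) with hT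
  have hST : S = b '' ↑T := by
    ext x
    constructor
    · rintro (⟨s, hs, rfl⟩ | hx)
      · exact ⟨(false, s), by simp [hT, hs], hb0 s⟩
      · by_cases hEn : Even n
        · rw [if_pos hEn, Set.mem_singleton_iff] at hx
          exact ⟨(true, Finset.univ), by simp [hT, hEn], by rw [hb1, hx]⟩
        · rw [if_neg hEn] at hx
          exact hx.elim
    · rintro ⟨⟨ε, s⟩, hp, rfl⟩
      rw [Finset.mem_coe, hT, Finset.mem_filter] at hp
      cases ε
      · rcases hp.2 with ⟨_, h2⟩ | ⟨h1, _⟩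
        · exact Or.inl ⟨s, h2, hb0 s⟩
        · exact absurd h1 (by simp)
      · rcases hp.2 with ⟨h1, _⟩ | ⟨_, h2, h3⟩
        · exact absurd h1 (by simp)
        · simp only at h2
          subst h2
          right
          rw [if_pos h3, hb1]
          exact Set.mem_singleton _
  haveI : Fintype (b '' (↑T : Set (Bool × Finset (Fin n))) : Set A) :=
    (T.finite_toSet.image b).fintype
  have hli : LinearIndependent ℂ
      ((↑) : (b '' (↑T : Set (Bool × Finset (Fin n))) : Set A) → A) :=
    ((linearIndepOn_id_range_iff b.injective).mpr b.linearIndependent).mono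
      (Set.image_subset_range _ _)
  have hfin : Module.finrank ℂ (Submodule.span ℂ S) = T.card := by
    rw [hST, finrank_span_set_eq_card hli]
    rw [Set.toFinset_image, Finset.card_image_of_injective _ b.injective,
      Finset.toFinset_coe]
  have hTcard : T.card = 2 ^ (n - 1) + (if Even n then 1 else 0) := by
    have h1 : (Finset.univ.filter
        fun p : Bool × Finset (Fin n) => p.1 = false ∧ Even p.2.card)
        = (Finset.univ.filter fun s : Finset (Fin n) => Even s.card).image
          (fun s => ((false : Bool), s)) := by
      ext ⟨ε, s⟩
      simp only [Finset.mem_filter, Finset.mem_univ, true_and, Finset.mem_image,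
        Prod.mk.injEq]
      constructor
      · rintro ⟨h1, h2⟩; exact ⟨s, h2, h1.symm, rfl⟩
      · rintro ⟨t, ht, h1, h2⟩; subst h2; exact ⟨h1.symm, ht⟩
    have h2 : (Finset.univ.filter
        fun p : Bool × Finset (Fin n) => p.1 = true ∧ p.2 = Finset.univ ∧ Even n)
        = if Even n then {((true : Bool), (Finset.univ : Finset (Fin n)))} else ∅ := by
      by_cases hEn : Even n
      · rw [if_pos hEn]
        ext ⟨ε, s⟩
        simp [hEn, Prod.ext_iff]
      · rw [if_neg hEn]
        ext ⟨ε, s⟩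
        simp [hEn]
    rw [hT, Finset.filter_or, Finset.card_union_of_disjoint, h1, h2,
      Finset.card_image_of_injective _
        (fun a b h => by simpa using (Prod.mk.injEq _ _ _ _ ▸ h).2),
      card_even_subsets n hn]
    · by_cases hEn : Even n <;> simp [hEn]
    · rw [Finset.disjoint_left]
      rintro ⟨ε, s⟩ hp hq
      rw [Finset.mem_filter] at hp hq
      rw [hp.2.1] at hq
      exact absurd hq.2.1 (by simp)
  have hrw : Module.finrank ℂ (Subalgebra.center ℂ A) =
      Module.finrank ℂ (Subalgebra.toSubmodule (Subalgebra.center ℂ A)) := rfl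
  rw [hrw, heq, hfin, hTcard]
  by_cases hEn : Even n <;> simp [hEn]
end

section
/- In the Drinfeld double DK_n of the Nichols Hopf algebra (presented by the relations below), the element 1 − K K̄ is central, the element (K + K̄)ξ_1⋯ξ_n ξ̄_1⋯ξ̄_n is central, and (1 + K K̄)w w̄' is central for any words w in the ξ_i and w̄' in the ξ̄_j with |w|+|w'| even. -/
lemma moveP {A : Type*} [Ring A] (P x : A) (hP : ∀ a : A, P * a = a * P) :
    ∀ (L : List A), (∀ y ∈ L, P * (x * y) = -(P * (y * x))) →
      P * (x * L.prod) = (-1 : ℤ) ^ L.length • (P * (L.prod * x))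
  | [], _ => by simp
  | a :: L, h => by
    have ha := h a List.mem_cons_self
    have ih := moveP P x hP L (fun y hy => h y (List.mem_cons_of_mem a hy))
    have hPa : ∀ u v : A, P * (u * v) = u * (P * v) := fun u v => by
      rw [hP (u * v), mul_assoc, ← hP v]
    calc P * (x * (a :: L).prod)
        = -(a * (P * (x * L.prod))) := by
          rw [List.prod_cons, ← mul_assoc x a, ← mul_assoc, ha, hPa a x, neg_mul,
            mul_assoc, mul_assoc]
      _ = -(a * ((-1:ℤ)^L.length • (P * (L.prod * x)))) := by rw [ih]
      _ = (-1:ℤ)^(a::L).length • (P * ((a::L).prod * x)) := by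
          rw [List.prod_cons, List.length_cons, mul_assoc, hPa a, mul_smul_comm,
            pow_succ, mul_smul]
          simp

lemma kill_left {A : Type*} [Ring A] (x : A) (hxx : x * x = 0) :
    ∀ (L : List A), (∀ y ∈ L, x * y = -(y * x)) → x ∈ L → x * L.prod = 0
  | [], _, hmem => absurd hmem List.not_mem_nil
  | a :: L, h, hmem => by
    rw [List.prod_cons]
    by_cases hx : x ∈ L
    · have ih := kill_left x hxx L (fun y hy => h y (List.mem_cons_of_mem a hy)) hx
      have ha := h a List.mem_cons_self
      rw [← mul_assoc, ha, neg_mul, mul_assoc, ih, mul_zero, neg_zero]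
    · have hxa : x = a := by
        rcases List.mem_cons.mp hmem with h1 | h1
        · exact h1
        · exact absurd h1 hx
      rw [← hxa, ← mul_assoc, hxx, zero_mul]

lemma kill_right {A : Type*} [Ring A] (x : A) (hxx : x * x = 0) :
    ∀ (L : List A), (∀ y ∈ L, x * y = -(y * x)) → x ∈ L → L.prod * x = 0
  | [], _, hmem => absurd hmem List.not_mem_nil
  | a :: L, h, hmem => by
    rw [List.prod_cons]
    by_cases hx : x ∈ L
    · rw [mul_assoc,
        kill_right x hxx L (fun y hy => h y (List.mem_cons_of_mem a hy)) hx, mul_zero]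
    · have hxa : x = a := by
        rcases List.mem_cons.mp hmem with h1 | h1
        · exact h1
        · exact absurd h1 hx
      have hm : x * L.prod = (-1:ℤ)^L.length • (L.prod * x) := by
        have := moveP (1:A) x (fun b => by rw [one_mul, mul_one]) L (fun y hy => by
          rw [one_mul, one_mul]; exact h y (List.mem_cons_of_mem a hy))
        simpa using this
      rw [← hxa, hm, smul_mul_assoc, mul_assoc, hxx, mul_zero, smul_zero]

lemma central_of_comm {A : Type*} [Ring A] [Algebra ℂ A] {S : Set A}
    (hgen : Algebra.adjoin ℂ S = ⊤) {z : A} (h : ∀ x ∈ S, z * x = x * z) :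
    z ∈ Set.center A := by
  rw [Semigroup.mem_center_iff]
  intro g
  have hle : Algebra.adjoin ℂ S ≤ Subalgebra.centralizer ℂ {z} := by
    apply Algebra.adjoin_le
    intro x hx
    show x ∈ Subalgebra.centralizer ℂ {z}
    rw [Subalgebra.mem_centralizer_iff]
    simp only [Set.mem_singleton_iff]
    rintro m rfl
    exact h x hx
  have hg : g ∈ Subalgebra.centralizer ℂ {z} := by
    apply hle
    rw [hgen]; trivial
  exact ((Subalgebra.mem_centralizer_iff ℂ).mp hg z rfl).symm

/-- In the Drinfeld double `DK_n` of the Nichols Hopf algebra (an algebra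
generated by `K, K̄, ξ_i, ξ̄_i` subject to the stated relations), the elements
`1 - KK̄` and `(K + K̄)ξ_1⋯ξ_n ξ̄_1⋯ξ̄_n` are central, and `(1 + KK̄)w w̄'` is
central for any words `w`, `w̄'` with `|w| + |w'|` even. -/
theorem stmt4 (n : ℕ) (A : Type*) [Ring A] [Algebra ℂ A]
    (K Kb : A) (ξ ξb : Fin n → A)
    (hK : K ^ 2 = 1) (hKb : Kb ^ 2 = 1)
    (hξ : ∀ i, ξ i ^ 2 = 0) (hξb : ∀ i, ξb i ^ 2 = 0)
    (hKξ : ∀ i, K * ξ i = -(ξ i * K)) (hKξb : ∀ i, K * ξb i = -(ξb i * K))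
    (hKbξ : ∀ i, Kb * ξ i = -(ξ i * Kb)) (hKbξb : ∀ i, Kb * ξb i = -(ξb i * Kb))
    (hKKb : K * Kb = Kb * K)
    (hξξ : ∀ i j, ξ i * ξ j = -(ξ j * ξ i))
    (hξbξb : ∀ i j, ξb i * ξb j = -(ξb j * ξb i))
    (hmix : ∀ i j, i ≠ j → ξ i * ξb j = -(ξb j * ξ i))
    (hii : ∀ i, ξ i * ξb i = 1 - K * Kb - ξb i * ξ i)
    (hgen : Algebra.adjoin ℂ ({K, Kb} ∪ Set.range ξ ∪ Set.range ξb) = ⊤) :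
    (1 - K * Kb) ∈ Set.center A ∧
      ((K + Kb) * finsetWord ξ Finset.univ * finsetWord ξb Finset.univ) ∈
        Set.center A ∧
      ∀ s t : Finset (Fin n), Even (s.card + t.card) →
        ((1 + K * Kb) * finsetWord ξ s * finsetWord ξb t) ∈ Set.center A := by
  have hKK : K * K = 1 := by rw [← pow_two]; exact hK
  have hKbKb : Kb * Kb = 1 := by rw [← pow_two]; exact hKb
  have hξ2 : ∀ i, ξ i * ξ i = 0 := fun i => by rw [← pow_two]; exact hξ i
  have hξb2 : ∀ i, ξb i * ξb i = 0 := fun i => by rw [← pow_two]; exact hξb i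
  have hzz : (K * Kb) * (K * Kb) = 1 := by
    rw [mul_assoc, ← mul_assoc Kb K Kb, ← hKKb, mul_assoc K Kb Kb, hKbKb, mul_one, hKK]
  -- generator case analysis
  have genCases : ∀ x ∈ ({K, Kb} ∪ Set.range ξ ∪ Set.range ξb : Set A),
      x = K ∨ x = Kb ∨ (∃ i, x = ξ i) ∨ (∃ i, x = ξb i) := by
    intro x hx
    rcases hx with (hx | ⟨i, rfl⟩) | ⟨i, rfl⟩
    · rcases hx with rfl | rfl
      · exact Or.inl rfl
      · exact Or.inr (Or.inl rfl)
    · exact Or.inr (Or.inr (Or.inl ⟨i, rfl⟩))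
    · exact Or.inr (Or.inr (Or.inr ⟨i, rfl⟩))
  -- K*Kb is central
  have hz : (K * Kb) ∈ Set.center A := by
    apply central_of_comm hgen
    intro x hx
    rcases genCases x hx with rfl | rfl | ⟨i, rfl⟩ | ⟨i, rfl⟩
    · rw [mul_assoc, ← hKKb, ← mul_assoc]
    · rw [mul_assoc, hKbKb, mul_one, ← mul_assoc, ← hKKb, mul_assoc, hKbKb, mul_one]
    · rw [mul_assoc, hKbξ i, mul_neg, ← mul_assoc, hKξ i, neg_mul, neg_neg, mul_assoc]
    · rw [mul_assoc, hKbξb i, mul_neg, ← mul_assoc, hKξb i, neg_mul, neg_neg, mul_assoc]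
  have hzc : ∀ a : A, (K * Kb) * a = a * (K * Kb) :=
    fun a => (Semigroup.mem_center_iff.mp hz a).symm
  -- Part 1
  have part1 : (1 - K * Kb) ∈ Set.center A := by
    rw [Semigroup.mem_center_iff]
    intro g
    rw [mul_sub, sub_mul, mul_one, one_mul, hzc g]
  -- P := 1 + K*Kb is central
  have hPc : ∀ a : A, (1 + K * Kb) * a = a * (1 + K * Kb) := fun a => by
    rw [add_mul, mul_add, one_mul, mul_one, hzc a]
  have hPQ : (1 + K * Kb) * (1 - K * Kb) = 0 := by
    rw [add_mul, one_mul, mul_sub, mul_one, hzz]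
    abel
  -- full anticommutation in the P-sector
  have hPanti : ∀ u v : A, ((∃ i, u = ξ i) ∨ (∃ i, u = ξb i)) →
      ((∃ i, v = ξ i) ∨ (∃ i, v = ξb i)) →
      (1 + K * Kb) * (u * v) = -((1 + K * Kb) * (v * u)) := by
    rintro u v (⟨i, rfl⟩ | ⟨i, rfl⟩) (⟨j, rfl⟩ | ⟨j, rfl⟩)
    · rw [hξξ i j, mul_neg]
    · by_cases hij : i = j
      · subst hij
        rw [hii i, mul_sub, hPQ, zero_sub]
      · rw [hmix i j hij, mul_neg]
    · by_cases hij : j = i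
      · subst hij
        rw [hii j, mul_sub, hPQ, zero_sub, neg_neg]
      · rw [hmix j i hij, mul_neg, neg_neg]
    · rw [hξbξb i j, mul_neg]
  -- Part 3
  have part3 : ∀ s t : Finset (Fin n), Even (s.card + t.card) →
      ((1 + K * Kb) * finsetWord ξ s * finsetWord ξb t) ∈ Set.center A := by
    intro s t hst
    apply central_of_comm hgen
    intro x hx
    set L : List A := ((s.sort (· ≤ ·)).map ξ) ++ ((t.sort (· ≤ ·)).map ξb) with hL
    have hWL : (1 + K * Kb) * finsetWord ξ s * finsetWord ξb t
        = (1 + K * Kb) * L.prod := by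
      rw [mul_assoc, hL, List.prod_append]; rfl
    have hGenL : ∀ y ∈ L, (∃ i, y = ξ i) ∨ (∃ i, y = ξb i) := by
      intro y hy
      rcases List.mem_append.mp hy with hy | hy
      · obtain ⟨i, _, rfl⟩ := List.mem_map.mp hy; exact Or.inl ⟨i, rfl⟩
      · obtain ⟨i, _, rfl⟩ := List.mem_map.mp hy; exact Or.inr ⟨i, rfl⟩
    have hlen : Even L.length := by
      have : L.length = s.card + t.card := by
        simp [hL]
      rw [this]; exact hst
    have key : (∀ y ∈ L, (1 + K * Kb) * (x * y) = -((1 + K * Kb) * (y * x))) →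
        ((1 + K * Kb) * finsetWord ξ s * finsetWord ξb t) * x
          = x * ((1 + K * Kb) * finsetWord ξ s * finsetWord ξb t) := by
      intro hax
      have hm := moveP (1 + K * Kb) x hPc L hax
      rw [Even.neg_one_pow hlen, one_smul] at hm
      rw [hWL, ← mul_assoc, ← hPc x, mul_assoc (1 + K * Kb) x L.prod, hm, mul_assoc]
    apply key
    intro y hy
    rcases genCases x hx with rfl | rfl | ⟨j, rfl⟩ | ⟨j, rfl⟩
    · rcases hGenL y hy with ⟨i, rfl⟩ | ⟨i, rfl⟩
      · rw [hKξ i, mul_neg]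
      · rw [hKξb i, mul_neg]
    · rcases hGenL y hy with ⟨i, rfl⟩ | ⟨i, rfl⟩
      · rw [hKbξ i, mul_neg]
      · rw [hKbξb i, mul_neg]
    · exact hPanti _ y (Or.inl ⟨j, rfl⟩) (hGenL y hy)
    · exact hPanti _ y (Or.inr ⟨j, rfl⟩) (hGenL y hy)
  -- Part 2
  have part2 : ((K + Kb) * finsetWord ξ Finset.univ * finsetWord ξb Finset.univ) ∈
      Set.center A := by
    have hc : ((1 + K * Kb) * finsetWord ξ Finset.univ * finsetWord ξb Finset.univ) ∈
        Set.center A := part3 Finset.univ Finset.univ ⟨Finset.univ.card, rfl⟩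
    set c : A := (1 + K * Kb) * finsetWord ξ Finset.univ * finsetWord ξb Finset.univ
      with hcdef
    have hcc : ∀ a : A, c * a = a * c := fun a => (Semigroup.mem_center_iff.mp hc a).symm
    set M : A := (K + Kb) * finsetWord ξ Finset.univ * finsetWord ξb Finset.univ
      with hMdef
    have hRP : (K + Kb) * (1 + K * Kb) = (K + Kb) + (K + Kb) := by
      have h5 : K * (K * Kb) = Kb := by rw [← mul_assoc, hKK, one_mul]
      have h6 : Kb * (K * Kb) = K := by rw [hKKb, ← mul_assoc, hKbKb, one_mul]
      rw [mul_add, mul_one, add_mul, h5, h6]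
      abel
    have hRc : (K + Kb) * c = M + M := by
      rw [hcdef, hMdef, ← mul_assoc, ← mul_assoc, hRP, add_mul, add_mul]
    have half : ∀ a : A, a + a = 0 → a = 0 := by
      intro a ha
      have h2 : (2 : ℂ) • a = 0 := by rw [two_smul]; exact ha
      have := congrArg (fun b => (2 : ℂ)⁻¹ • b) h2
      simpa [smul_smul] using this
    -- for x anticommuting with K+Kb : M*x = -(x*M)
    have flip : ∀ x : A, x * (K + Kb) = -((K + Kb) * x) → M * x = -(x * M) := by
      intro x hx
      have e1 : M * x + M * x = -((x * M) + (x * M)) := by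
        calc M * x + M * x = ((K + Kb) * c) * x := by rw [hRc, add_mul]
          _ = ((K + Kb) * x) * c := by rw [mul_assoc, hcc x, ← mul_assoc]
          _ = -((x * ((K + Kb) * c))) := by
              rw [← neg_neg ((K + Kb) * x), ← hx, neg_mul, mul_assoc]
          _ = -((x * M) + (x * M)) := by rw [hRc, mul_add]
      have e2 : (M * x + x * M) + (M * x + x * M) = 0 := by
        have h' := e1
        rw [neg_add] at h'
        linear_combination (norm := abel) h'
      exact eq_neg_of_add_eq_zero_left (half _ e2)
    have comm2 : ∀ x : A, x * (K + Kb) = (K + Kb) * x → M * x = x * M := by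
      intro x hx
      have e1 : M * x + M * x = (x * M) + (x * M) := by
        calc M * x + M * x = ((K + Kb) * c) * x := by rw [hRc, add_mul]
          _ = ((K + Kb) * x) * c := by rw [mul_assoc, hcc x, ← mul_assoc]
          _ = x * ((K + Kb) * c) := by rw [← hx, mul_assoc]
          _ = (x * M) + (x * M) := by rw [hRc, mul_add]
      have e2 : (M * x - x * M) + (M * x - x * M) = 0 := by
        linear_combination (norm := abel) e1
      exact sub_eq_zero.mp (half _ e2)
    have negR : ∀ x : A, K * x = -(x * K) → Kb * x = -(x * Kb) →
        x * (K + Kb) = -((K + Kb) * x) := by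
      intro x h1 h2
      rw [mul_add, add_mul, h1, h2]
      abel
    apply central_of_comm hgen
    intro x hx
    rcases genCases x hx with rfl | rfl | ⟨j, rfl⟩ | ⟨j, rfl⟩
    · -- K
      apply comm2
      rw [mul_add, add_mul, hKKb]
    · -- Kb
      apply comm2
      rw [mul_add, add_mul, hKKb]
    · -- ξ j : both sides vanish
      have hkill : ξ j * finsetWord ξ (Finset.univ : Finset (Fin n)) = 0 := by
        apply kill_left (ξ j) (hξ2 j)
        · intro y hy
          obtain ⟨i, _, rfl⟩ := List.mem_map.mp hy
          exact hξξ j i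
        · exact List.mem_map.mpr ⟨j, (Finset.mem_sort _).mpr (Finset.mem_univ j), rfl⟩
      have h0 : ξ j * M = 0 := by
        rw [hMdef, ← mul_assoc, ← mul_assoc, negR (ξ j) (hKξ j) (hKbξ j), neg_mul,
          neg_mul, mul_assoc (K + Kb), hkill, mul_zero, zero_mul, neg_zero]
      rw [flip (ξ j) (negR (ξ j) (hKξ j) (hKbξ j)), h0, neg_zero]
    · -- ξb j : both sides vanish
      have hkill : finsetWord ξb (Finset.univ : Finset (Fin n)) * ξb j = 0 := by
        apply kill_right (ξb j) (hξb2 j)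
        · intro y hy
          obtain ⟨i, _, rfl⟩ := List.mem_map.mp hy
          exact hξbξb j i
        · exact List.mem_map.mpr ⟨j, (Finset.mem_sort _).mpr (Finset.mem_univ j), rfl⟩
      have h0 : M * ξb j = 0 := by
        rw [hMdef, mul_assoc, hkill, mul_zero]
      have h1 := flip (ξb j) (negR (ξb j) (hKξb j) (hKbξb j))
      rw [h0] at h1
      rw [h0, neg_eq_zero.mp h1.symm]
  exact ⟨part1, part2, part3⟩
end

section
/- In DK_n, every left (equivalently right) integral is a scalar multiple of (1 + K + K̄ + KK̄)ξ_1⋯ξ_n ξ̄_1⋯ξ̄_n; in particular DK_n is unimodular for all n. -/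
open List

def IsSgn (σ : ℂ) : Prop := σ = 1 ∨ σ = -1
lemma IsSgn.one : IsSgn 1 := Or.inl rfl
lemma IsSgn.neg {σ} (h : IsSgn σ) : IsSgn (-σ) := by rcases h with h|h <;> simp [IsSgn, h]
lemma IsSgn.mul {σ τ} (h : IsSgn σ) (h' : IsSgn τ) : IsSgn (σ*τ) := by
  rcases h with h|h <;> rcases h' with h'|h' <;> simp [IsSgn, h, h']
lemma IsSgn.mul_self {σ} (h : IsSgn σ) : σ * σ = 1 := by rcases h with h|h <;> simp [h]
lemma IsSgn.neg_one : IsSgn (-1) := Or.inr rfl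
lemma IsSgn.ne_zero {σ} (h : IsSgn σ) : σ ≠ 0 := by rcases h with h|h <;> simp [h]

section aux
variable {A : Type*} [Ring A] [Algebra ℂ A]

lemma perm_sign_s5 {ι : Type*} (ξ : ι → A) (hanti : ∀ a b, ξ a * ξ b = -(ξ b * ξ a))
    {l l' : List ι} (hp : l.Perm l') :
    ∃ σ : ℂ, IsSgn σ ∧ (l.map ξ).prod = σ • (l'.map ξ).prod := by
  induction hp with
  | nil => exact ⟨1, IsSgn.one, by simp⟩
  | cons a _ ih =>
      obtain ⟨σ, hσ, he⟩ := ih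
      exact ⟨σ, hσ, by simp [he, mul_smul_comm]⟩
  | swap a b t =>
      refine ⟨-1, IsSgn.neg_one, ?_⟩
      simp only [map_cons, prod_cons, ← mul_assoc, hanti b a]
      simp [neg_smul]
  | trans _ _ ih1 ih2 =>
      obtain ⟨σ,hσ,e⟩ := ih1; obtain ⟨τ,hτ,e'⟩ := ih2
      exact ⟨σ*τ, hσ.mul hτ, by rw [e, e', smul_smul]⟩

variable {n : ℕ} (ξ : Fin n → A)

lemma sort_insert_perm {s : Finset (Fin n)} {i : Fin n} (hi : i ∉ s) :
    ((insert i s).sort (· ≤ ·)).Perm (i :: s.sort (· ≤ ·)) :=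
  ((Finset.sort_perm_toList _ _).trans (Finset.toList_insert hi)).trans
    ((Finset.sort_perm_toList _ _).symm.cons i)

lemma sort_self_perm {s : Finset (Fin n)} {i : Fin n} (hi : i ∈ s) :
    (s.sort (· ≤ ·)).Perm (i :: (s.erase i).sort (· ≤ ·)) := by
  have := sort_insert_perm (s := s.erase i) (i := i) (Finset.notMem_erase i s)
  rwa [Finset.insert_erase hi] at this

lemma sort_erase_perm {s : Finset (Fin n)} {i : Fin n} (hi : i ∈ s) :
    ((s.sort (· ≤ ·)).erase i).Perm ((s.erase i).sort (· ≤ ·)) := by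
  have h := (sort_self_perm (s := s) hi).erase i
  rwa [List.erase_cons_head] at h

variable (hanti : ∀ a b, ξ a * ξ b = -(ξ b * ξ a)) (hsq : ∀ i, ξ i ^ 2 = 0)

include hanti in
lemma mul_word_insert {s : Finset (Fin n)} {i : Fin n} (hi : i ∉ s) :
    ∃ σ : ℂ, IsSgn σ ∧ ξ i * finsetWord ξ s = σ • finsetWord ξ (insert i s) := by
  obtain ⟨σ, hσ, he⟩ := perm_sign_s5 ξ hanti (sort_insert_perm hi)
  refine ⟨σ, hσ, ?_⟩
  simp only [map_cons, prod_cons] at he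
  rw [finsetWord, finsetWord, he, smul_smul, hσ.mul_self, one_smul]

include hanti in
lemma word_mul_insert {s : Finset (Fin n)} {i : Fin n} (hi : i ∉ s) :
    ∃ σ : ℂ, IsSgn σ ∧ finsetWord ξ s * ξ i = σ • finsetWord ξ (insert i s) := by
  have hp : ((insert i s).sort (· ≤ ·)).Perm (s.sort (· ≤ ·) ++ [i]) :=
    (sort_insert_perm hi).trans (List.perm_append_singleton i _).symm
  obtain ⟨σ, hσ, he⟩ := perm_sign_s5 ξ hanti hp
  refine ⟨σ, hσ, ?_⟩
  simp only [map_append, prod_append, map_cons, prod_cons, map_nil, prod_nil, mul_one] at he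
  rw [finsetWord, finsetWord, he, smul_smul, hσ.mul_self, one_smul]

include hanti hsq in
lemma mul_word_self {s : Finset (Fin n)} {i : Fin n} (hi : i ∈ s) :
    ξ i * finsetWord ξ s = 0 := by
  obtain ⟨σ, hσ, he⟩ := perm_sign_s5 ξ hanti (sort_self_perm hi)
  simp only [map_cons, prod_cons] at he
  rw [finsetWord, he, mul_smul_comm, ← mul_assoc, ← sq, hsq, zero_mul, smul_zero]

include hanti hsq in
lemma word_mul_self {s : Finset (Fin n)} {i : Fin n} (hi : i ∈ s) :
    finsetWord ξ s * ξ i = 0 := by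
  have hp : (s.sort (· ≤ ·)).Perm ((s.erase i).sort (· ≤ ·) ++ [i]) :=
    (sort_self_perm hi).trans (List.perm_append_singleton i _).symm
  obtain ⟨σ, hσ, he⟩ := perm_sign_s5 ξ hanti hp
  simp only [map_append, prod_append, map_cons, prod_cons, map_nil, prod_nil, mul_one] at he
  rw [finsetWord, he, smul_mul_assoc, mul_assoc, ← sq, hsq, mul_zero, smul_zero]

end aux

section mix
set_option linter.unusedSectionVars false
variable {A : Type*} [Ring A] [Algebra ℂ A] {n : ℕ}
variable (K Kb : A) (ξ ξb : Fin n → A)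

lemma negswap {a b : A} (h : a = -b) : b = -a := by rw [h, neg_neg]

lemma mul_list_anticomm_exact (z : A) (l : List A) (h : ∀ a ∈ l, z * a = -(a * z)) :
    z * l.prod = ((-1:ℂ)^l.length) • (l.prod * z) := by
  induction l with
  | nil => simp
  | cons a t ih =>
      have ht : ∀ x ∈ t, z * x = -(x * z) := fun x hx => h x (mem_cons_of_mem _ hx)
      rw [prod_cons, ← mul_assoc, h a mem_cons_self, neg_mul, mul_assoc, ih ht]
      rw [mul_smul_comm, length_cons, pow_succ]
      rw [← mul_assoc]
      simp [neg_smul, smul_smul, mul_comm]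

lemma mul_list_anticomm (z : A) (l : List A) (h : ∀ a ∈ l, z * a = -(a * z)) :
    ∃ σ : ℂ, IsSgn σ ∧ z * l.prod = σ • (l.prod * z) := by
  refine ⟨(-1)^l.length, ?_, mul_list_anticomm_exact z l h⟩
  rcases Nat.even_or_odd l.length with he|ho
  · exact Or.inl (he.neg_one_pow)
  · exact Or.inr (ho.neg_one_pow)

lemma commKKbz (z : A) (h1 : K * z = -(z * K)) (h2 : Kb * z = -(z * Kb)) :
    Commute (K * Kb) z := by
  show K * Kb * z = z * (K * Kb)
  rw [mul_assoc, h2, mul_neg, ← mul_assoc, h1, neg_mul, neg_neg, mul_assoc]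

variable (hKξ : ∀ i, K * ξ i = -(ξ i * K)) (hKbξ : ∀ i, Kb * ξ i = -(ξ i * Kb))
variable (hKξb : ∀ i, K * ξb i = -(ξb i * K)) (hKbξb : ∀ i, Kb * ξb i = -(ξb i * Kb))
variable (hmix : ∀ i j, i ≠ j → ξ i * ξb j = -(ξb j * ξ i))
variable (hii : ∀ i, ξ i * ξb i = 1 - K * Kb - ξb i * ξ i)

include hii in
lemma hii' (i : Fin n) : ξb i * ξ i = 1 - K * Kb - ξ i * ξb i := by
  have h := hii i
  have h2 : ξ i * ξb i + ξb i * ξ i = 1 - K * Kb := by rw [h]; abel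
  rw [eq_sub_iff_add_eq, ← h2]; abel

include hKξ hKbξ hmix hii in
lemma mixM : ∀ l : List (Fin n), l.Nodup → ∀ i ∈ l,
    ∃ σ τ : ℂ, IsSgn σ ∧ IsSgn τ ∧
      ξb i * (l.map ξ).prod =
        σ • ((1 - K * Kb) * ((l.erase i).map ξ).prod) + τ • ((l.map ξ).prod * ξb i) := by
  intro l
  induction l with
  | nil => intro _ i hi; exact absurd hi not_mem_nil
  | cons j t ih =>
    intro hnd i hi
    have hjt : j ∉ t := (nodup_cons.mp hnd).1
    have hndt : t.Nodup := (nodup_cons.mp hnd).2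
    rcases eq_or_ne i j with rfl | hji
    · have hit : i ∉ t := hjt
      obtain ⟨τ', hτ', he⟩ := mul_list_anticomm (ξb i) (t.map ξ) (by
        intro a ha
        obtain ⟨j', hj', rfl⟩ := mem_map.mp ha
        exact negswap (hmix j' i (fun h => hit (h ▸ hj'))))
      refine ⟨1, -τ', IsSgn.one, hτ'.neg, ?_⟩
      simp only [map_cons, prod_cons, erase_cons_head]
      rw [← mul_assoc, hii' K Kb ξ ξb hii i, sub_mul, mul_assoc, he]
      rw [mul_smul_comm, ← mul_assoc]
      rw [one_smul, neg_smul, sub_eq_add_neg]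
    · have hit : i ∈ t := by
        rcases mem_cons.mp hi with h | h
        · exact absurd h hji
        · exact h
      obtain ⟨σ, τ, hσ, hτ, he⟩ := ih hndt i hit
      refine ⟨-σ, -τ, hσ.neg, hτ.neg, ?_⟩
      have hji' : ξb i * ξ j = -(ξ j * ξb i) := negswap (hmix j i (Ne.symm hji))
      have hc : Commute (ξ j) (1 - K * Kb) :=
        Commute.sub_right (Commute.one_right (ξ j))
          ((commKKbz K Kb (ξ j) (hKξ j) (hKbξ j)).symm)
      have hcomm : ξ j * ((1 - K * Kb) * ((t.erase i).map ξ).prod)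
          = (1 - K * Kb) * (ξ j * ((t.erase i).map ξ).prod) := by
        rw [← mul_assoc, hc.eq, mul_assoc]
      have herase : (j :: t).erase i = j :: t.erase i := by
        rw [List.erase_cons_tail]; simp [Ne.symm hji]
      rw [herase]
      simp only [map_cons, prod_cons]
      rw [← mul_assoc, hji', neg_mul, mul_assoc, he, mul_add, mul_smul_comm, mul_smul_comm,
        neg_add, hcomm, ← neg_smul, ← neg_smul]
      simp only [mul_assoc]

include hKξ hKbξ hKξb hKbξb hmix hii in
lemma mixM' : ∀ l : List (Fin n), l.Nodup → ∀ i ∈ l,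
    ∃ σ τ : ℂ, IsSgn σ ∧ IsSgn τ ∧
      (l.map ξb).prod * ξ i =
        σ • ((1 - K * Kb) * ((l.erase i).map ξb).prod) + τ • (ξ i * (l.map ξb).prod) := by
  intro l
  induction l with
  | nil => intro _ i hi; exact absurd hi not_mem_nil
  | cons j t ih =>
    intro hnd i hi
    have hjt : j ∉ t := (nodup_cons.mp hnd).1
    have hndt : t.Nodup := (nodup_cons.mp hnd).2
    rcases eq_or_ne i j with rfl | hji
    · have hit : i ∉ t := hjt
      obtain ⟨τ', hτ', he⟩ := mul_list_anticomm (ξ i) (t.map ξb) (by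
        intro a ha
        obtain ⟨j', hj', rfl⟩ := mem_map.mp ha
        exact hmix i j' (fun h => hit (h ▸ hj')))
      have he' : (t.map ξb).prod * ξ i = τ' • (ξ i * (t.map ξb).prod) := by
        rw [he, smul_smul, hτ'.mul_self, one_smul]
      refine ⟨τ', -τ', hτ', hτ'.neg, ?_⟩
      simp only [map_cons, prod_cons, erase_cons_head]
      rw [mul_assoc, he', mul_smul_comm, ← mul_assoc, hii' K Kb ξ ξb hii i, sub_mul,
        mul_assoc, smul_sub, neg_smul, sub_eq_add_neg]
    · have hit : i ∈ t := by
        rcases mem_cons.mp hi with h | h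
        · exact absurd h hji
        · exact h
      obtain ⟨σ, τ, hσ, hτ, he⟩ := ih hndt i hit
      refine ⟨σ, -τ, hσ, hτ.neg, ?_⟩
      have hji' : ξb j * ξ i = -(ξ i * ξb j) := negswap (hmix i j hji)
      have hc : Commute (ξb j) (1 - K * Kb) :=
        Commute.sub_right (Commute.one_right (ξb j))
          ((commKKbz K Kb (ξb j) (hKξb j) (hKbξb j)).symm)
      have hcomm : ξb j * ((1 - K * Kb) * ((t.erase i).map ξb).prod)
          = (1 - K * Kb) * (ξb j * ((t.erase i).map ξb).prod) := by
        rw [← mul_assoc, hc.eq, mul_assoc]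
      have herase : (j :: t).erase i = j :: t.erase i := by
        rw [List.erase_cons_tail]; simp [Ne.symm hji]
      rw [herase]
      simp only [map_cons, prod_cons]
      rw [mul_assoc, he, mul_add, mul_smul_comm, mul_smul_comm, hcomm,
        ← mul_assoc (ξb j) (ξ i), hji', neg_mul, mul_assoc, smul_neg, ← neg_smul]

end mix

section main
set_option linter.unusedSectionVars false
set_option maxHeartbeats 2000000
variable {A : Type*} [Ring A] [Algebra ℂ A] {n : ℕ}
variable (K Kb : A) (ξ ξb : Fin n → A)
variable (hK : K ^ 2 = 1) (hKb : Kb ^ 2 = 1)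
variable (hξ : ∀ i, ξ i ^ 2 = 0) (hξb : ∀ i, ξb i ^ 2 = 0)
variable (hKξ : ∀ i, K * ξ i = -(ξ i * K)) (hKξb : ∀ i, K * ξb i = -(ξb i * K))
variable (hKbξ : ∀ i, Kb * ξ i = -(ξ i * Kb)) (hKbξb : ∀ i, Kb * ξb i = -(ξb i * Kb))
variable (hKKb : K * Kb = Kb * K)
variable (hξξ : ∀ i j, ξ i * ξ j = -(ξ j * ξ i))
variable (hξbξb : ∀ i j, ξb i * ξb j = -(ξb j * ξb i))
variable (hmix : ∀ i j, i ≠ j → ξ i * ξb j = -(ξb j * ξ i))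
variable (hii : ∀ i, ξ i * ξb i = 1 - K * Kb - ξb i * ξ i)

include hK hKb hKKb

lemma PK : K * (1 + K + Kb + K * Kb) = 1 + K + Kb + K * Kb := by
  have hKK : K * K = 1 := by rw [← sq, hK]
  have hKbKb : Kb * Kb = 1 := by rw [← sq, hKb]
  have hKbK : Kb * K = K * Kb := hKKb.symm
  have kk : ∀ x : A, K * (K * x) = x := fun x => by rw [← mul_assoc, hKK, one_mul]
  have kbkb : ∀ x : A, Kb * (Kb * x) = x := fun x => by rw [← mul_assoc, hKbKb, one_mul]
  have kbk : ∀ x : A, Kb * (K * x) = K * (Kb * x) := fun x => by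
    rw [← mul_assoc, hKbK, mul_assoc]
  simp only [mul_add, add_mul, mul_one, one_mul, mul_assoc, kk, kbkb, kbk, hKK, hKbKb, hKbK]
  abel

lemma PKb : Kb * (1 + K + Kb + K * Kb) = 1 + K + Kb + K * Kb := by
  have hKK : K * K = 1 := by rw [← sq, hK]
  have hKbKb : Kb * Kb = 1 := by rw [← sq, hKb]
  have hKbK : Kb * K = K * Kb := hKKb.symm
  have kk : ∀ x : A, K * (K * x) = x := fun x => by rw [← mul_assoc, hKK, one_mul]
  have kbkb : ∀ x : A, Kb * (Kb * x) = x := fun x => by rw [← mul_assoc, hKbKb, one_mul]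
  have kbk : ∀ x : A, Kb * (K * x) = K * (Kb * x) := fun x => by
    rw [← mul_assoc, hKbK, mul_assoc]
  simp only [mul_add, add_mul, mul_one, one_mul, mul_assoc, kk, kbkb, kbk, hKK, hKbKb, hKbK]
  abel

lemma PKr : (1 + K + Kb + K * Kb) * K = 1 + K + Kb + K * Kb := by
  have hKK : K * K = 1 := by rw [← sq, hK]
  have hKbKb : Kb * Kb = 1 := by rw [← sq, hKb]
  have hKbK : Kb * K = K * Kb := hKKb.symm
  have kk : ∀ x : A, K * (K * x) = x := fun x => by rw [← mul_assoc, hKK, one_mul]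
  have kbkb : ∀ x : A, Kb * (Kb * x) = x := fun x => by rw [← mul_assoc, hKbKb, one_mul]
  have kbk : ∀ x : A, Kb * (K * x) = K * (Kb * x) := fun x => by
    rw [← mul_assoc, hKbK, mul_assoc]
  simp only [mul_add, add_mul, mul_one, one_mul, mul_assoc, kk, kbkb, kbk, hKK, hKbKb, hKbK]
  abel

lemma PKbr : (1 + K + Kb + K * Kb) * Kb = 1 + K + Kb + K * Kb := by
  have hKK : K * K = 1 := by rw [← sq, hK]
  have hKbKb : Kb * Kb = 1 := by rw [← sq, hKb]
  have hKbK : Kb * K = K * Kb := hKKb.symm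
  have kk : ∀ x : A, K * (K * x) = x := fun x => by rw [← mul_assoc, hKK, one_mul]
  have kbkb : ∀ x : A, Kb * (Kb * x) = x := fun x => by rw [← mul_assoc, hKbKb, one_mul]
  have kbk : ∀ x : A, Kb * (K * x) = K * (Kb * x) := fun x => by
    rw [← mul_assoc, hKbK, mul_assoc]
  simp only [mul_add, add_mul, mul_one, one_mul, mul_assoc, kk, kbkb, kbk, hKK, hKbKb, hKbK]
  abel

lemma PKKb0 : (1 + K + Kb + K * Kb) * (1 - K * Kb) = 0 := by
  have hKK : K * K = 1 := by rw [← sq, hK]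
  have hKbKb : Kb * Kb = 1 := by rw [← sq, hKb]
  have hKbK : Kb * K = K * Kb := hKKb.symm
  have kk : ∀ x : A, K * (K * x) = x := fun x => by rw [← mul_assoc, hKK, one_mul]
  have kbkb : ∀ x : A, Kb * (Kb * x) = x := fun x => by rw [← mul_assoc, hKbKb, one_mul]
  have kbk : ∀ x : A, Kb * (K * x) = K * (Kb * x) := fun x => by
    rw [← mul_assoc, hKbK, mul_assoc]
  simp only [mul_sub, sub_mul, mul_add, add_mul, mul_one, one_mul, mul_assoc, kk, kbkb,
    kbk, hKK, hKbKb, hKbK]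
  abel

lemma PmKKb0 : (1 - K - Kb + K * Kb) * (1 - K * Kb) = 0 := by
  have hKK : K * K = 1 := by rw [← sq, hK]
  have hKbKb : Kb * Kb = 1 := by rw [← sq, hKb]
  have hKbK : Kb * K = K * Kb := hKKb.symm
  have kk : ∀ x : A, K * (K * x) = x := fun x => by rw [← mul_assoc, hKK, one_mul]
  have kbkb : ∀ x : A, Kb * (Kb * x) = x := fun x => by rw [← mul_assoc, hKbKb, one_mul]
  have kbk : ∀ x : A, Kb * (K * x) = K * (Kb * x) := fun x => by
    rw [← mul_assoc, hKbK, mul_assoc]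
  simp only [mul_sub, sub_mul, mul_add, add_mul, mul_one, one_mul, mul_assoc, kk, kbkb,
    kbk, hKK, hKbKb, hKbK]
  abel

omit hK hKb hKKb

lemma zP (z : A) (h1 : K * z = -(z * K)) (h2 : Kb * z = -(z * Kb)) :
    z * (1 + K + Kb + K * Kb) = (1 - K - Kb + K * Kb) * z := by
  have e1 : z * K = -(K * z) := negswap h1
  have e2 : z * Kb = -(Kb * z) := negswap h2
  have e3 : z * (K * Kb) = K * Kb * z := ((commKKbz K Kb z h1 h2).symm).eq
  simp only [mul_add, add_mul, sub_mul, mul_one, one_mul, e1, e2, e3]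
  abel

lemma word_comm_KKb (hKξ : ∀ i, K * ξ i = -(ξ i * K)) (hKbξ : ∀ i, Kb * ξ i = -(ξ i * Kb))
    (s : Finset (Fin n)) : Commute (K * Kb) (finsetWord ξ s) := by
  apply Commute.list_prod_right
  intro x hx
  obtain ⟨j, hj, rfl⟩ := List.mem_map.mp hx
  exact commKKbz K Kb (ξ j) (hKξ j) (hKbξ j)

lemma word_mul_z (z : A) (hz : ∀ i, z * ξ i = -(ξ i * z)) (s : Finset (Fin n)) :
    finsetWord ξ s * z = ((-1:ℂ)^s.card) • (z * finsetWord ξ s) := by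
  have h := mul_list_anticomm_exact z ((s.sort (· ≤ ·)).map ξ) (by
    intro a ha
    obtain ⟨j, hj, rfl⟩ := List.mem_map.mp ha
    exact hz j)
  rw [List.length_map, Finset.length_sort] at h
  rw [finsetWord, h, smul_smul, ← pow_add]
  have : Even (s.card + s.card) := Even.add_self _
  rw [this.neg_one_pow, one_smul]

include hKξ hKbξ hξξ hmix hii in
lemma Fmu (i : Fin n) : ∃ σ τ : ℂ, IsSgn σ ∧ IsSgn τ ∧
    ξb i * finsetWord ξ Finset.univ =
      σ • ((1 - K * Kb) * finsetWord ξ (Finset.univ.erase i)) +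
        τ • (finsetWord ξ Finset.univ * ξb i) := by
  have hiu : i ∈ Finset.univ.sort (· ≤ ·) := by
    rw [Finset.mem_sort]; exact Finset.mem_univ i
  obtain ⟨σ, τ, hσ, hτ, he⟩ := mixM K Kb ξ ξb hKξ hKbξ hmix hii
    (Finset.univ.sort (· ≤ ·)) (Finset.sort_nodup _ _) i hiu
  obtain ⟨σ₂, hσ₂, he₂⟩ := perm_sign_s5 ξ hξξ (sort_erase_perm (Finset.mem_univ i))
  refine ⟨σ * σ₂, τ, hσ.mul hσ₂, hτ, ?_⟩
  rw [finsetWord, he, he₂, mul_smul_comm, smul_smul]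
  rfl

include hKξ hKbξ hKξb hKbξb hξbξb hmix hii in
lemma Fmu' (i : Fin n) : ∃ σ τ : ℂ, IsSgn σ ∧ IsSgn τ ∧
    finsetWord ξb Finset.univ * ξ i =
      σ • ((1 - K * Kb) * finsetWord ξb (Finset.univ.erase i)) +
        τ • (ξ i * finsetWord ξb Finset.univ) := by
  have hiu : i ∈ Finset.univ.sort (· ≤ ·) := by
    rw [Finset.mem_sort]; exact Finset.mem_univ i
  obtain ⟨σ, τ, hσ, hτ, he⟩ := mixM' K Kb ξ ξb hKξ hKbξ hKξb hKbξb hmix hii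
    (Finset.univ.sort (· ≤ ·)) (Finset.sort_nodup _ _) i hiu
  obtain ⟨σ₂, hσ₂, he₂⟩ := perm_sign_s5 ξb hξbξb (sort_erase_perm (Finset.mem_univ i))
  refine ⟨σ * σ₂, τ, hσ.mul hσ₂, hτ, ?_⟩
  rw [finsetWord, he, he₂, mul_smul_comm, smul_smul]
  rfl

include hK hKb hKKb in
lemma ZL1 : K * ((1 + K + Kb + K * Kb) * finsetWord ξ Finset.univ * finsetWord ξb Finset.univ)
    = (1 + K + Kb + K * Kb) * finsetWord ξ Finset.univ * finsetWord ξb Finset.univ := by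
  rw [← mul_assoc, ← mul_assoc, PK K Kb hK hKb hKKb]

include hK hKb hKKb in
lemma ZL2 : Kb * ((1 + K + Kb + K * Kb) * finsetWord ξ Finset.univ * finsetWord ξb Finset.univ)
    = (1 + K + Kb + K * Kb) * finsetWord ξ Finset.univ * finsetWord ξb Finset.univ := by
  rw [← mul_assoc, ← mul_assoc, PKb K Kb hK hKb hKKb]

include hKξ hKbξ hξξ hξ in
lemma ZL3 (i : Fin n) :
    ξ i * ((1 + K + Kb + K * Kb) * finsetWord ξ Finset.univ * finsetWord ξb Finset.univ)
    = 0 := by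
  rw [← mul_assoc, ← mul_assoc, zP K Kb (ξ i) (hKξ i) (hKbξ i)]
  rw [mul_assoc (1 - K - Kb + K * Kb), mul_word_self ξ hξξ hξ (Finset.mem_univ i),
    mul_zero, zero_mul]

include hK hKb hKKb hKξ hKbξ hKξb hKbξb hξξ hξb hξbξb hmix hii in
lemma ZL4 (i : Fin n) :
    ξb i * ((1 + K + Kb + K * Kb) * finsetWord ξ Finset.univ * finsetWord ξb Finset.univ)
    = 0 := by
  obtain ⟨σ, τ, hσ, hτ, he⟩ := Fmu K Kb ξ ξb hKξ hKbξ hξξ hmix hii i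
  rw [← mul_assoc, ← mul_assoc, zP K Kb (ξb i) (hKξb i) (hKbξb i),
    mul_assoc (1 - K - Kb + K * Kb), he, mul_add, mul_smul_comm, mul_smul_comm,
    ← mul_assoc (1 - K - Kb + K * Kb) (1 - K * Kb), PmKKb0 K Kb hK hKb hKKb, zero_mul,
    smul_zero, zero_add, smul_mul_assoc, mul_assoc, mul_assoc,
    mul_word_self ξb hξbξb hξb (Finset.mem_univ i), mul_zero, mul_zero, smul_zero]

include hK hKb hKKb hKξ hKξb in
lemma ZR1 : ((1 + K + Kb + K * Kb) * finsetWord ξ Finset.univ * finsetWord ξb Finset.univ) * K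
    = (1 + K + Kb + K * Kb) * finsetWord ξ Finset.univ * finsetWord ξb Finset.univ := by
  rw [mul_assoc, word_mul_z ξb K hKξb, mul_smul_comm, ← mul_assoc,
    mul_assoc (1 + K + Kb + K * Kb), word_mul_z ξ K hKξ, mul_smul_comm, smul_mul_assoc,
    smul_smul, ← pow_add, Even.neg_one_pow (Even.add_self _), one_smul,
    ← mul_assoc (1 + K + Kb + K * Kb) K, PKr K Kb hK hKb hKKb]

include hK hKb hKKb hKbξ hKbξb in
lemma ZR2 : ((1 + K + Kb + K * Kb) * finsetWord ξ Finset.univ * finsetWord ξb Finset.univ) * Kb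
    = (1 + K + Kb + K * Kb) * finsetWord ξ Finset.univ * finsetWord ξb Finset.univ := by
  rw [mul_assoc, word_mul_z ξb Kb hKbξb, mul_smul_comm, ← mul_assoc,
    mul_assoc (1 + K + Kb + K * Kb), word_mul_z ξ Kb hKbξ, mul_smul_comm, smul_mul_assoc,
    smul_smul, ← pow_add, Even.neg_one_pow (Even.add_self _), one_smul,
    ← mul_assoc (1 + K + Kb + K * Kb) Kb, PKbr K Kb hK hKb hKKb]

include hK hKb hKKb hKξ hKbξ hKξb hKbξb hξ hξξ hξbξb hmix hii in
lemma ZR3 (i : Fin n) :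
    ((1 + K + Kb + K * Kb) * finsetWord ξ Finset.univ * finsetWord ξb Finset.univ) * ξ i
    = 0 := by
  obtain ⟨σ, τ, hσ, hτ, he⟩ := Fmu' K Kb ξ ξb hKξ hKξb hKbξ hKbξb hξbξb hmix hii i
  have c2 : Commute (finsetWord ξ Finset.univ) (1 - K * Kb) :=
    (Commute.one_right _).sub_right (word_comm_KKb K Kb ξ hKξ hKbξ Finset.univ).symm
  rw [mul_assoc, he, mul_add, mul_smul_comm, mul_smul_comm,
    ← mul_assoc ((1 + K + Kb + K * Kb) * finsetWord ξ Finset.univ) (1 - K * Kb),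
    mul_assoc (1 + K + Kb + K * Kb) (finsetWord ξ Finset.univ) (1 - K * Kb), c2.eq,
    ← mul_assoc (1 + K + Kb + K * Kb) (1 - K * Kb), PKKb0 K Kb hK hKb hKKb, zero_mul,
    zero_mul, smul_zero, zero_add,
    ← mul_assoc ((1 + K + Kb + K * Kb) * finsetWord ξ Finset.univ) (ξ i),
    mul_assoc (1 + K + Kb + K * Kb) (finsetWord ξ Finset.univ) (ξ i),
    word_mul_self ξ hξξ hξ (Finset.mem_univ i), mul_zero, zero_mul, smul_zero]

include hξb hξbξb in
lemma ZR4 (i : Fin n) :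
    ((1 + K + Kb + K * Kb) * finsetWord ξ Finset.univ * finsetWord ξb Finset.univ) * ξb i
    = 0 := by
  rw [mul_assoc, word_mul_self ξb hξbξb hξb (Finset.mem_univ i), mul_zero]

omit hK hKb hKKb hξ hξb hKξ hKξb hKbξ hKbξb hξξ hξbξb hmix hii in
lemma coord_map_eq {ι : Type*} [Fintype ι] [DecidableEq ι] (b : Module.Basis ι ℂ A)
    (L : A →ₗ[ℂ] A) (x : A) (q p₀ : ι)
    (h0 : ∀ p, b.repr x p ≠ 0 → p ≠ p₀ → b.coord q (L (b p)) = 0) :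
    b.coord q (L x) = b.repr x p₀ * b.coord q (L (b p₀)) := by
  conv_lhs => rw [← Module.Basis.sum_repr b x]
  rw [map_sum, map_sum]
  have he : ∀ p, b.coord q (L (b.repr x p • b p)) = b.repr x p * b.coord q (L (b p)) := by
    intro p; rw [map_smul, map_smul, smul_eq_mul]
  simp only [he]
  exact Finset.sum_eq_single p₀
    (fun p _ hne => by
      by_cases hz : b.repr x p = 0
      · rw [hz, zero_mul]
      · rw [h0 p hz hne, mul_zero])
    (fun h => absurd (Finset.mem_univ _) h)

lemma coord_basis {ι : Type*} [DecidableEq ι] (b : Module.Basis ι ℂ A) (p q : ι) :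
    b.coord q (b p) = if p = q then 1 else 0 := by
  rw [Module.Basis.coord_apply, Module.Basis.repr_self, Finsupp.single_apply]

lemma zkappa (z : A) (h1 : K * z = -(z * K)) (h2 : Kb * z = -(z * Kb)) (a c : Bool) :
    ∃ σ : ℂ, IsSgn σ ∧
      z * ((if a then K else 1) * (if c then Kb else 1)) =
        σ • (((if a then K else 1) * (if c then Kb else 1)) * z) := by
  cases a <;> cases c
  · exact ⟨1, IsSgn.one, by simp⟩
  · exact ⟨-1, IsSgn.neg_one, by simp [negswap h2, neg_smul]⟩
  · exact ⟨-1, IsSgn.neg_one, by simp [negswap h1, neg_smul]⟩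
  · exact ⟨1, IsSgn.one, by simp [((commKKbz K Kb z h1 h2).symm).eq, mul_assoc]⟩

include hK hKb hKKb in
lemma kappaKKb (a c : Bool) :
    ((if a then K else 1) * (if c then Kb else 1)) * (K * Kb) =
      ((if !a then K else 1) * (if !c then Kb else 1)) := by
  have hKK : K * K = 1 := by rw [← sq, hK]
  have hKbKb : Kb * Kb = 1 := by rw [← sq, hKb]
  have hKbK : Kb * K = K * Kb := hKKb.symm
  have kk : ∀ x : A, K * (K * x) = x := fun x => by rw [← mul_assoc, hKK, one_mul]
  have kbkb : ∀ x : A, Kb * (Kb * x) = x := fun x => by rw [← mul_assoc, hKbKb, one_mul]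
  have kbk : ∀ x : A, Kb * (K * x) = K * (Kb * x) := fun x => by
    rw [← mul_assoc, hKbK, mul_assoc]
  cases a <;> cases c <;>
    simp [mul_assoc, kk, kbkb, kbk, hKK, hKbKb, hKbK]

variable (b : Module.Basis (Bool × Bool × Finset (Fin n) × Finset (Fin n)) ℂ A)
variable (hb : ∀ p, b p = (if p.1 then K else 1) * (if p.2.1 then Kb else 1) *
      finsetWord ξ p.2.2.1 * finsetWord ξb p.2.2.2)

include hK hb in
lemma BK (p : Bool × Bool × Finset (Fin n) × Finset (Fin n)) :
    K * b p = b (!p.1, p.2.1, p.2.2.1, p.2.2.2) := by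
  obtain ⟨a, c, S, T⟩ := p
  have hKK : K * K = 1 := by rw [← sq, hK]
  have kk : ∀ x : A, K * (K * x) = x := fun x => by rw [← mul_assoc, hKK, one_mul]
  rw [hb, hb]
  cases a <;> cases c <;> simp [mul_assoc, kk]

include hK hKb hKKb hb in
lemma BKb (p : Bool × Bool × Finset (Fin n) × Finset (Fin n)) :
    Kb * b p = b (p.1, !p.2.1, p.2.2.1, p.2.2.2) := by
  obtain ⟨a, c, S, T⟩ := p
  have hKbKb : Kb * Kb = 1 := by rw [← sq, hKb]
  have hKbK : Kb * K = K * Kb := hKKb.symm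
  have kbkb : ∀ x : A, Kb * (Kb * x) = x := fun x => by rw [← mul_assoc, hKbKb, one_mul]
  have kbk : ∀ x : A, Kb * (K * x) = K * (Kb * x) := fun x => by
    rw [← mul_assoc, hKbK, mul_assoc]
  rw [hb, hb]
  cases a <;> cases c <;> simp [mul_assoc, kbkb, kbk]

omit hK hKb hKKb hξ hξb hKξ hKξb hKbξ hKbξb hξξ hξbξb hmix hii in
lemma ctx (z w : A) (σ : ℂ) (h : z * w = σ • (w * z)) (y : A) :
    z * (w * y) = σ • (w * (z * y)) := by
  rw [← mul_assoc, h, smul_mul_assoc, mul_assoc]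

omit hK hKb hKKb hξ hξb hKξ hKξb hKbξ hKbξb hξξ hξbξb hmix hii in
lemma ctx2 (z w u v : A) (σ τ : ℂ) (h : z * w = σ • (u * v) + τ • (w * z)) (y : A) :
    z * (w * y) = σ • (u * (v * y)) + τ • (w * (z * y)) := by
  rw [← mul_assoc, h, add_mul, smul_mul_assoc, smul_mul_assoc, mul_assoc, mul_assoc]

omit hK hKb hKKb hξ hξb hKξ hKξb hKbξ hKbξb hξξ hξbξb hmix hii in
lemma ctxcomm (z w y : A) (h : Commute z w) : w * (z * y) = z * (w * y) := by
  rw [← mul_assoc, ← h.eq, mul_assoc]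

omit hK hKb hKKb hξ hξb hKξ hKξb hKbξ hKbξb hξξ hξbξb hmix hii in
lemma zIf (z u : A) (h : u * z = -(z * u)) (a : Bool) :
    ∃ σ : ℂ, IsSgn σ ∧ z * (if a then u else 1) = σ • ((if a then u else 1) * z) := by
  cases a
  · exact ⟨1, IsSgn.one, by simp⟩
  · exact ⟨-1, IsSgn.neg_one, by simp [negswap h, neg_smul]⟩

include hK hKb hKKb in
lemma kappa_sub (a c : Bool) (X : A) :
    (if a then K else 1) * ((if c then Kb else 1) * ((1 - K * Kb) * X)) =
      (if a then K else 1) * ((if c then Kb else 1) * X) -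
        (if !a then K else 1) * ((if !c then Kb else 1) * X) := by
  have h := kappaKKb K Kb hK hKb hKKb a c
  rw [← mul_assoc, ← mul_assoc, ← mul_assoc, ← mul_assoc, ← sub_mul]
  congr 1
  rw [mul_one_sub, h]

include hKξ hKbξ hξ hξξ hb in
lemma xiB0 (i : Fin n) (p : Bool × Bool × Finset (Fin n) × Finset (Fin n))
    (hi : i ∈ p.2.2.1) : ξ i * b p = 0 := by
  obtain ⟨a, c, S, T⟩ := p
  dsimp only at hi ⊢
  obtain ⟨σa, hσa, ha⟩ := zIf (ξ i) K (hKξ i) a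
  obtain ⟨σc, hσc, hc⟩ := zIf (ξ i) Kb (hKbξ i) c
  rw [hb]
  dsimp only
  simp only [mul_assoc]
  rw [ctx _ _ _ ha, ctx _ _ _ hc, ← mul_assoc (ξ i) (finsetWord ξ S) (finsetWord ξb T),
    mul_word_self ξ hξξ hξ hi, zero_mul, mul_zero, smul_zero, mul_zero, smul_zero]

include hKξ hKbξ hξξ hb in
lemma xiB (i : Fin n) (p : Bool × Bool × Finset (Fin n) × Finset (Fin n))
    (hi : i ∉ p.2.2.1) : ∃ σ : ℂ, IsSgn σ ∧
      ξ i * b p = σ • b (p.1, p.2.1, insert i p.2.2.1, p.2.2.2) := by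
  obtain ⟨a, c, S, T⟩ := p
  dsimp only at hi ⊢
  obtain ⟨σa, hσa, ha⟩ := zIf (ξ i) K (hKξ i) a
  obtain ⟨σc, hσc, hc⟩ := zIf (ξ i) Kb (hKbξ i) c
  obtain ⟨σ₁, hσ₁, h₁⟩ := mul_word_insert ξ hξξ hi
  refine ⟨σa * σc * σ₁, (hσa.mul hσc).mul hσ₁, ?_⟩
  rw [hb, hb]
  dsimp only
  simp only [mul_assoc]
  rw [ctx _ _ _ ha, ctx _ _ _ hc, ← mul_assoc (ξ i) (finsetWord ξ S) (finsetWord ξb T), h₁]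
  simp only [smul_mul_assoc, mul_smul_comm, smul_smul, mul_assoc]

include hK hKb hKKb hKξ hKbξ hKξb hKbξb hξb hξξ hξbξb hmix hii hb in
lemma xibB_mem (i : Fin n) (a c : Bool) (T : Finset (Fin n)) (hi : i ∈ T) :
    ∃ σ : ℂ, IsSgn σ ∧
      ξb i * b (a, c, Finset.univ, T) =
        σ • (b (a, c, Finset.univ.erase i, T) - b (!a, !c, Finset.univ.erase i, T)) := by
  obtain ⟨σa, hσa, ha⟩ := zIf (ξb i) K (hKξb i) a
  obtain ⟨σc, hσc, hc⟩ := zIf (ξb i) Kb (hKbξb i) c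
  obtain ⟨σ, τ, hσ, hτ, hF⟩ := Fmu K Kb ξ ξb hKξ hKbξ hξξ hmix hii i
  refine ⟨σa * σc * σ, (hσa.mul hσc).mul hσ, ?_⟩
  rw [hb, hb, hb]
  dsimp only
  simp only [mul_assoc]
  rw [ctx _ _ _ ha, ctx _ _ _ hc, ctx2 _ _ _ _ _ _ hF,
    mul_word_self ξb hξbξb hξb hi, mul_zero, smul_zero, add_zero]
  simp only [mul_smul_comm, smul_smul]
  rw [kappa_sub K Kb hK hKb hKKb a c]

include hK hKb hKKb hKξ hKbξ hKξb hKbξb hξξ hξbξb hmix hii hb in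
lemma xibB_not (i : Fin n) (a c : Bool) (T : Finset (Fin n)) (hi : i ∉ T) :
    ∃ σ τ : ℂ, IsSgn σ ∧ IsSgn τ ∧
      ξb i * b (a, c, Finset.univ, T) =
        σ • (b (a, c, Finset.univ.erase i, T) - b (!a, !c, Finset.univ.erase i, T)) +
          τ • b (a, c, Finset.univ, insert i T) := by
  obtain ⟨σa, hσa, ha⟩ := zIf (ξb i) K (hKξb i) a
  obtain ⟨σc, hσc, hc⟩ := zIf (ξb i) Kb (hKbξb i) c
  obtain ⟨σ, τ, hσ, hτ, hF⟩ := Fmu K Kb ξ ξb hKξ hKbξ hξξ hmix hii i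
  obtain ⟨σ₂, hσ₂, h₂⟩ := mul_word_insert ξb hξbξb hi
  refine ⟨σa * σc * σ, σa * σc * (τ * σ₂), (hσa.mul hσc).mul hσ,
    (hσa.mul hσc).mul (hτ.mul hσ₂), ?_⟩
  rw [hb, hb, hb, hb]
  dsimp only
  simp only [mul_assoc]
  rw [ctx _ _ _ ha, ctx _ _ _ hc, ctx2 _ _ _ _ _ _ hF, h₂]
  simp only [mul_add, smul_add, mul_smul_comm, smul_smul]
  rw [kappa_sub K Kb hK hKb hKKb a c]

include hξb hξbξb hb in
lemma rxibB0 (i : Fin n) (p : Bool × Bool × Finset (Fin n) × Finset (Fin n))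
    (hi : i ∈ p.2.2.2) : b p * ξb i = 0 := by
  obtain ⟨a, c, S, T⟩ := p
  dsimp only at hi ⊢
  rw [hb]
  dsimp only
  simp only [mul_assoc]
  rw [word_mul_self ξb hξbξb hξb hi, mul_zero, mul_zero, mul_zero]

include hξbξb hb in
lemma rxibB (i : Fin n) (p : Bool × Bool × Finset (Fin n) × Finset (Fin n))
    (hi : i ∉ p.2.2.2) : ∃ σ : ℂ, IsSgn σ ∧
      b p * ξb i = σ • b (p.1, p.2.1, p.2.2.1, insert i p.2.2.2) := by
  obtain ⟨a, c, S, T⟩ := p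
  dsimp only at hi ⊢
  obtain ⟨σ₂, hσ₂, h₂⟩ := word_mul_insert ξb hξbξb hi
  refine ⟨σ₂, hσ₂, ?_⟩
  rw [hb, hb]
  dsimp only
  simp only [mul_assoc]
  rw [h₂]
  simp only [mul_smul_comm]

include hK hKb hKKb hKξ hKbξ hKξb hKbξb hξ hξξ hξbξb hmix hii hb in
lemma rxiB_mem (i : Fin n) (a c : Bool) (S : Finset (Fin n)) (hi : i ∈ S) :
    ∃ σ : ℂ, IsSgn σ ∧
      b (a, c, S, Finset.univ) * ξ i =
        σ • (b (a, c, S, Finset.univ.erase i) - b (!a, !c, S, Finset.univ.erase i)) := by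
  obtain ⟨σ, τ, hσ, hτ, hF⟩ := Fmu' K Kb ξ ξb hKξ hKξb hKbξ hKbξb hξbξb hmix hii i
  have comm : Commute (1 - K * Kb) (finsetWord ξ S) :=
    (Commute.one_left _).sub_left (word_comm_KKb K Kb ξ hKξ hKbξ S)
  refine ⟨σ, hσ, ?_⟩
  rw [hb, hb, hb]
  dsimp only
  simp only [mul_assoc]
  rw [hF]
  simp only [mul_add, smul_add, mul_smul_comm, smul_smul]
  rw [← mul_assoc (finsetWord ξ S) (ξ i), word_mul_self ξ hξξ hξ hi, zero_mul, mul_zero,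
    mul_zero, smul_zero, add_zero, ctxcomm _ _ _ comm, kappa_sub K Kb hK hKb hKKb a c]

include hK hKb hKKb hKξ hKbξ hKξb hKbξb hξξ hξbξb hmix hii hb in
lemma rxiB_not (i : Fin n) (a c : Bool) (S : Finset (Fin n)) (hi : i ∉ S) :
    ∃ σ τ : ℂ, IsSgn σ ∧ IsSgn τ ∧
      b (a, c, S, Finset.univ) * ξ i =
        σ • (b (a, c, S, Finset.univ.erase i) - b (!a, !c, S, Finset.univ.erase i)) +
          τ • b (a, c, insert i S, Finset.univ) := by
  obtain ⟨σ, τ, hσ, hτ, hF⟩ := Fmu' K Kb ξ ξb hKξ hKξb hKbξ hKbξb hξbξb hmix hii i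
  have comm : Commute (1 - K * Kb) (finsetWord ξ S) :=
    (Commute.one_left _).sub_left (word_comm_KKb K Kb ξ hKξ hKbξ S)
  obtain ⟨σ₂, hσ₂, h₂⟩ := word_mul_insert ξ hξξ hi
  refine ⟨σ, τ * σ₂, hσ, hτ.mul hσ₂, ?_⟩
  rw [hb, hb, hb, hb]
  dsimp only
  simp only [mul_assoc]
  rw [hF]
  simp only [mul_add, smul_add, mul_smul_comm, smul_smul]
  rw [← mul_assoc (finsetWord ξ S) (ξ i), h₂, ctxcomm _ _ _ comm,
    kappa_sub K Kb hK hKb hKKb a c]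
  simp only [mul_assoc, smul_sub, smul_mul_assoc, mul_smul_comm, smul_smul]

include hK hKb hKKb hKξ hKξb hb in
lemma BKr (a c : Bool) :
    b (a, c, Finset.univ, Finset.univ) * K = b (!a, c, Finset.univ, Finset.univ) := by
  have hKK : K * K = 1 := by rw [← sq, hK]
  have kk : ∀ x : A, K * (K * x) = x := fun x => by rw [← mul_assoc, hKK, one_mul]
  have hKbK : Kb * K = K * Kb := hKKb.symm
  have kbk : ∀ x : A, Kb * (K * x) = K * (Kb * x) := fun x => by
    rw [← mul_assoc, hKbK, mul_assoc]
  rw [hb, hb]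
  dsimp only
  simp only [mul_assoc]
  rw [word_mul_z ξb K hKξb, mul_smul_comm, ← mul_assoc (finsetWord ξ Finset.univ) K,
    word_mul_z ξ K hKξ, smul_mul_assoc, smul_smul, ← pow_add,
    Even.neg_one_pow (Even.add_self _), one_smul]
  simp only [mul_assoc]
  cases a <;> cases c <;> simp [kk, kbk]

include hK hKb hKKb hKbξ hKbξb hb in
lemma BKbr (a c : Bool) :
    b (a, c, Finset.univ, Finset.univ) * Kb = b (a, !c, Finset.univ, Finset.univ) := by
  have hKbKb : Kb * Kb = 1 := by rw [← sq, hKb]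
  have kbkb : ∀ x : A, Kb * (Kb * x) = x := fun x => by rw [← mul_assoc, hKbKb, one_mul]
  rw [hb, hb]
  dsimp only
  simp only [mul_assoc]
  rw [word_mul_z ξb Kb hKbξb, mul_smul_comm, ← mul_assoc (finsetWord ξ Finset.univ) Kb,
    word_mul_z ξ Kb hKbξ, smul_mul_assoc, smul_smul, ← pow_add,
    Even.neg_one_pow (Even.add_self _), one_smul]
  simp only [mul_assoc]
  cases a <;> cases c <;> simp [kbkb]


include hK hKb hKKb hb in
lemma BLam :
    (1 + K + Kb + K * Kb) * finsetWord ξ Finset.univ * finsetWord ξb Finset.univ =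
      b (false, false, Finset.univ, Finset.univ) + b (true, false, Finset.univ, Finset.univ) +
        b (false, true, Finset.univ, Finset.univ) + b (true, true, Finset.univ, Finset.univ) := by
  rw [hb, hb, hb, hb]
  dsimp only
  simp only [if_true, if_false, Bool.false_eq_true, ite_true, ite_false]
  simp only [add_mul, one_mul, mul_assoc]

include hK hKb hKKb hξ hξb hKξ hKξb hKbξ hKbξb hξξ hξbξb hmix hii hb in
lemma LeftChar (x : A) (h1 : K * x = x) (h2 : Kb * x = x)
    (h3 : ∀ i, ξ i * x = 0) (h4 : ∀ i, ξb i * x = 0) :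
    ∃ c : ℂ, x = c • ((1 + K + Kb + K * Kb) * finsetWord ξ Finset.univ *
      finsetWord ξb Finset.univ) := by
  classical
  have hEU : ∀ i : Fin n, Finset.univ.erase i ≠ (Finset.univ : Finset (Fin n)) :=
    fun i => Finset.erase_ne_self.mpr (Finset.mem_univ i)
  -- Step A : coefficients with S ≠ univ vanish
  have hA : ∀ p : Bool × Bool × Finset (Fin n) × Finset (Fin n),
      p.2.2.1 ≠ Finset.univ → b.repr x p = 0 := by
    rintro ⟨a, c, S, T⟩ hS
    obtain ⟨i, hi⟩ : ∃ i, i ∉ S := by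
      by_contra hcon; push_neg at hcon
      exact hS (Finset.eq_univ_iff_forall.mpr hcon)
    obtain ⟨σ₀, hσ₀, h₀⟩ := xiB K Kb ξ ξb hKξ hKbξ hξξ b hb i (a, c, S, T) hi
    have hkey := coord_map_eq b (LinearMap.mulLeft ℂ (ξ i)) x
      (a, c, insert i S, T) (a, c, S, T) (by
        rintro ⟨a', c', S', T'⟩ hrep hne
        rw [LinearMap.mulLeft_apply]
        by_cases hiS' : i ∈ S'
        · rw [xiB0 K Kb ξ ξb hξ hKξ hKbξ hξξ b hb i (a', c', S', T') hiS', map_zero]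
        · obtain ⟨σ', hσ', h'⟩ := xiB K Kb ξ ξb hKξ hKbξ hξξ b hb i (a', c', S', T') hiS'
          rw [h', map_smul, coord_basis, if_neg, smul_zero]
          intro heq
          apply hne
          simp only [Prod.mk.injEq] at heq
          obtain ⟨ea, ec, eS, eT⟩ := heq
          have : S' = S := by
            rw [← Finset.erase_insert hiS', eS, Finset.erase_insert hi]
          simp [Prod.ext_iff, ea, ec, eT, this])
    rw [LinearMap.mulLeft_apply, h3 i, map_zero] at hkey
    rw [LinearMap.mulLeft_apply, h₀, map_smul, coord_basis, if_pos rfl, smul_eq_mul,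
      mul_one] at hkey
    exact (mul_eq_zero.mp hkey.symm).resolve_right hσ₀.ne_zero
  -- Step B : coefficients with S = univ, T ≠ univ vanish
  have hB : ∀ (a c : Bool) (T : Finset (Fin n)), T ≠ Finset.univ →
      b.repr x (a, c, Finset.univ, T) = 0 := by
    intro a c T hT
    obtain ⟨i, hi⟩ : ∃ i, i ∉ T := by
      by_contra hcon; push_neg at hcon
      exact hT (Finset.eq_univ_iff_forall.mpr hcon)
    obtain ⟨σ, τ, hσ, hτ, h₀⟩ :=
      xibB_not K Kb ξ ξb hK hKb hKξ hKξb hKbξ hKbξb hKKb hξξ hξbξb hmix hii b hb i a c T hi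
    have hkey := coord_map_eq b (LinearMap.mulLeft ℂ (ξb i)) x
      (a, c, Finset.univ, insert i T) (a, c, Finset.univ, T) (by
        rintro ⟨a', c', S', T'⟩ hrep hne
        rw [LinearMap.mulLeft_apply]
        by_cases hS' : S' = Finset.univ
        · subst hS'
          by_cases hiT' : i ∈ T'
          · obtain ⟨σ', hσ', h'⟩ := xibB_mem K Kb ξ ξb hK hKb hξb hKξ hKξb hKbξ hKbξb hKKb
              hξξ hξbξb hmix hii b hb i a' c' T' hiT'
            rw [h', map_smul, map_sub, coord_basis, coord_basis, if_neg, if_neg]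
            · simp
            · exact fun heq => hEU i (congrArg (fun r => r.2.2.1) heq)
            · exact fun heq => hEU i (congrArg (fun r => r.2.2.1) heq)
          · obtain ⟨σ', τ', hσ', hτ', h'⟩ := xibB_not K Kb ξ ξb hK hKb hKξ hKξb hKbξ hKbξb
              hKKb hξξ hξbξb hmix hii b hb i a' c' T' hiT'
            rw [h', map_add, map_smul, map_sub, coord_basis, coord_basis, map_smul,
              coord_basis, if_neg, if_neg, if_neg]
            · simp
            · intro heq
              apply hne
              simp only [Prod.mk.injEq] at heq
              obtain ⟨ea, ec, _, eT⟩ := heq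
              have : T' = T := by
                rw [← Finset.erase_insert hiT', eT, Finset.erase_insert hi]
              simp [Prod.ext_iff, ea, ec, this]
            · exact fun heq => hEU i (congrArg (fun r => r.2.2.1) heq)
            · exact fun heq => hEU i (congrArg (fun r => r.2.2.1) heq)
        · exact absurd (hA (a', c', S', T') hS') hrep)
    rw [LinearMap.mulLeft_apply, h4 i, map_zero] at hkey
    rw [LinearMap.mulLeft_apply, h₀] at hkey
    simp only [map_add, map_smul, map_sub, coord_basis, Prod.mk.injEq, hEU i,
      and_true, true_and, and_false, false_and, if_true, if_false, ite_true, ite_false,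
      sub_zero, sub_self, smul_zero, zero_add, smul_eq_mul, mul_one, mul_zero, if_pos rfl] at hkey
    exact (mul_eq_zero.mp hkey.symm).resolve_right hτ.ne_zero
  -- Step C : K-toggle
  have hC : ∀ a c S T, b.repr x ((a,c,S,T) : Bool × Bool × Finset (Fin n) × Finset (Fin n))
      = b.repr x (!a,c,S,T) := by
    intro a c S T
    have hkey := coord_map_eq b (LinearMap.mulLeft ℂ K) x (a,c,S,T) (!a,c,S,T) (by
      rintro ⟨a',c',S',T'⟩ hrep hne
      rw [LinearMap.mulLeft_apply, BK K Kb ξ ξb hK b hb (a',c',S',T'), coord_basis, if_neg]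
      intro heq
      apply hne
      simp only [Prod.mk.injEq] at heq ⊢
      obtain ⟨ea, rest⟩ := heq
      exact ⟨by rw [← ea, Bool.not_not], rest⟩)
    rw [LinearMap.mulLeft_apply, h1, Module.Basis.coord_apply] at hkey
    rw [LinearMap.mulLeft_apply, BK K Kb ξ ξb hK b hb (!a,c,S,T), coord_basis] at hkey
    simp only [Bool.not_not] at hkey
    simpa using hkey
  -- Step D : Kb-toggle
  have hD : ∀ a c S T, b.repr x ((a,c,S,T) : Bool × Bool × Finset (Fin n) × Finset (Fin n))
      = b.repr x (a,!c,S,T) := by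
    intro a c S T
    have hkey := coord_map_eq b (LinearMap.mulLeft ℂ Kb) x (a,c,S,T) (a,!c,S,T) (by
      rintro ⟨a',c',S',T'⟩ hrep hne
      rw [LinearMap.mulLeft_apply, BKb K Kb ξ ξb hK hKb hKKb b hb (a',c',S',T'),
        coord_basis, if_neg]
      intro heq
      apply hne
      simp only [Prod.mk.injEq] at heq ⊢
      obtain ⟨ea, ec, rest⟩ := heq
      exact ⟨ea, by rw [← ec, Bool.not_not], rest⟩)
    rw [LinearMap.mulLeft_apply, h2, Module.Basis.coord_apply] at hkey
    rw [LinearMap.mulLeft_apply, BKb K Kb ξ ξb hK hKb hKKb b hb (a,!c,S,T),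
      coord_basis] at hkey
    simp only [Bool.not_not] at hkey
    simpa using hkey
  -- assemble
  refine ⟨b.repr x (false, false, Finset.univ, Finset.univ), ?_⟩
  have e10 : b.repr x (true, false, Finset.univ, Finset.univ)
      = b.repr x (false, false, Finset.univ, Finset.univ) := by
    simpa using hC true false Finset.univ Finset.univ
  have e01 : b.repr x (false, true, Finset.univ, Finset.univ)
      = b.repr x (false, false, Finset.univ, Finset.univ) := by
    simpa using hD false true Finset.univ Finset.univ
  have e11 : b.repr x (true, true, Finset.univ, Finset.univ)
      = b.repr x (false, false, Finset.univ, Finset.univ) := by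
    have h' := hC true true Finset.univ Finset.univ
    simp only [Bool.not_true] at h'
    rw [h', e01]
  apply b.repr.injective
  rw [map_smul, BLam K Kb ξ ξb hK hKb hKKb b hb, map_add, map_add, map_add,
    Module.Basis.repr_self, Module.Basis.repr_self, Module.Basis.repr_self, Module.Basis.repr_self]
  ext ⟨a, c, S, T⟩
  rw [Finsupp.smul_apply, Finsupp.add_apply, Finsupp.add_apply, Finsupp.add_apply,
    Finsupp.single_apply, Finsupp.single_apply, Finsupp.single_apply, Finsupp.single_apply]
  by_cases hS : S = Finset.univ
  · subst hS
    by_cases hT : T = Finset.univ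
    · subst hT
      cases a <;> cases c <;> simp [e10, e01, e11, smul_eq_mul]
    · have h0' := hB a c T hT
      simp [h0', Ne.symm hT]
  · have h0' := hA (a, c, S, T) hS
    simp [h0', Ne.symm hS]

include hK hKb hKKb hξ hξb hKξ hKξb hKbξ hKbξb hξξ hξbξb hmix hii hb in
lemma RightChar (x : A) (h1 : x * K = x) (h2 : x * Kb = x)
    (h3 : ∀ i, x * ξ i = 0) (h4 : ∀ i, x * ξb i = 0) :
    ∃ c : ℂ, x = c • ((1 + K + Kb + K * Kb) * finsetWord ξ Finset.univ *
      finsetWord ξb Finset.univ) := by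
  classical
  have hEU : ∀ i : Fin n, Finset.univ.erase i ≠ (Finset.univ : Finset (Fin n)) :=
    fun i => Finset.erase_ne_self.mpr (Finset.mem_univ i)
  -- Step A' : coefficients with T ≠ univ vanish
  have hA : ∀ p : Bool × Bool × Finset (Fin n) × Finset (Fin n),
      p.2.2.2 ≠ Finset.univ → b.repr x p = 0 := by
    rintro ⟨a, c, S, T⟩ hT
    obtain ⟨i, hi⟩ : ∃ i, i ∉ T := by
      by_contra hcon; push_neg at hcon
      exact hT (Finset.eq_univ_iff_forall.mpr hcon)
    obtain ⟨σ₀, hσ₀, h₀⟩ := rxibB K Kb ξ ξb hξbξb b hb i (a, c, S, T) hi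
    have hkey := coord_map_eq b (LinearMap.mulRight ℂ (ξb i)) x
      (a, c, S, insert i T) (a, c, S, T) (by
        rintro ⟨a', c', S', T'⟩ hrep hne
        rw [LinearMap.mulRight_apply]
        by_cases hiT' : i ∈ T'
        · rw [rxibB0 K Kb ξ ξb hξb hξbξb b hb i (a', c', S', T') hiT', map_zero]
        · obtain ⟨σ', hσ', h'⟩ := rxibB K Kb ξ ξb hξbξb b hb i (a', c', S', T') hiT'
          rw [h', map_smul, coord_basis, if_neg, smul_zero]
          intro heq
          apply hne
          simp only [Prod.mk.injEq] at heq
          obtain ⟨ea, ec, eS, eT⟩ := heq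
          have : T' = T := by
            rw [← Finset.erase_insert hiT', eT, Finset.erase_insert hi]
          simp [Prod.ext_iff, ea, ec, eS, this])
    rw [LinearMap.mulRight_apply, h4 i, map_zero] at hkey
    rw [LinearMap.mulRight_apply, h₀, map_smul, coord_basis, if_pos rfl, smul_eq_mul,
      mul_one] at hkey
    exact (mul_eq_zero.mp hkey.symm).resolve_right hσ₀.ne_zero
  -- Step B' : coefficients with T = univ, S ≠ univ vanish
  have hB : ∀ (a c : Bool) (S : Finset (Fin n)), S ≠ Finset.univ →
      b.repr x (a, c, S, Finset.univ) = 0 := by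
    intro a c S hS
    obtain ⟨i, hi⟩ : ∃ i, i ∉ S := by
      by_contra hcon; push_neg at hcon
      exact hS (Finset.eq_univ_iff_forall.mpr hcon)
    obtain ⟨σ, τ, hσ, hτ, h₀⟩ :=
      rxiB_not K Kb ξ ξb hK hKb hKξ hKξb hKbξ hKbξb hKKb hξξ hξbξb hmix hii b hb i a c S hi
    have hkey := coord_map_eq b (LinearMap.mulRight ℂ (ξ i)) x
      (a, c, insert i S, Finset.univ) (a, c, S, Finset.univ) (by
        rintro ⟨a', c', S', T'⟩ hrep hne
        rw [LinearMap.mulRight_apply]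
        by_cases hT' : T' = Finset.univ
        · subst hT'
          by_cases hiS' : i ∈ S'
          · obtain ⟨σ', hσ', h'⟩ := rxiB_mem K Kb ξ ξb hK hKb hξ hKξ hKξb hKbξ hKbξb hKKb
              hξξ hξbξb hmix hii b hb i a' c' S' hiS'
            rw [h', map_smul, map_sub, coord_basis, coord_basis, if_neg, if_neg]
            · simp
            · exact fun heq => hEU i (congrArg (fun r => r.2.2.2) heq)
            · exact fun heq => hEU i (congrArg (fun r => r.2.2.2) heq)
          · obtain ⟨σ', τ', hσ', hτ', h'⟩ := rxiB_not K Kb ξ ξb hK hKb hKξ hKξb hKbξ hKbξb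
              hKKb hξξ hξbξb hmix hii b hb i a' c' S' hiS'
            rw [h', map_add, map_smul, map_sub, coord_basis, coord_basis, map_smul,
              coord_basis, if_neg, if_neg, if_neg]
            · simp
            · intro heq
              apply hne
              simp only [Prod.mk.injEq] at heq
              obtain ⟨ea, ec, eS, _⟩ := heq
              have : S' = S := by
                rw [← Finset.erase_insert hiS', eS, Finset.erase_insert hi]
              simp [Prod.ext_iff, ea, ec, this]
            · exact fun heq => hEU i (congrArg (fun r => r.2.2.2) heq)
            · exact fun heq => hEU i (congrArg (fun r => r.2.2.2) heq)
        · exact absurd (hA (a', c', S', T') hT') hrep)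
    rw [LinearMap.mulRight_apply, h3 i, map_zero] at hkey
    rw [LinearMap.mulRight_apply, h₀] at hkey
    have hne2 : S ≠ insert i S := fun h => hi (by rw [h]; exact Finset.mem_insert_self i S)
    simp only [map_add, map_smul, map_sub, coord_basis, Prod.mk.injEq, hEU i,
      and_true, true_and, and_false, false_and, if_true, if_false, ite_true, ite_false,
      sub_zero, sub_self, smul_zero, zero_add, smul_eq_mul, mul_one, mul_zero,
      if_pos rfl] at hkey
    exact (mul_eq_zero.mp hkey.symm).resolve_right hτ.ne_zero
  -- Step C' : K-toggle on the top coefficients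
  have hC : ∀ a c : Bool, b.repr x ((a,c,Finset.univ,Finset.univ) :
      Bool × Bool × Finset (Fin n) × Finset (Fin n))
      = b.repr x (!a,c,Finset.univ,Finset.univ) := by
    intro a c
    have hkey := coord_map_eq b (LinearMap.mulRight ℂ K) x (a,c,Finset.univ,Finset.univ)
      (!a,c,Finset.univ,Finset.univ) (by
      rintro ⟨a',c',S',T'⟩ hrep hne
      rw [LinearMap.mulRight_apply]
      by_cases hT' : T' = Finset.univ
      · by_cases hS' : S' = Finset.univ
        · subst hT'; subst hS'
          rw [BKr K Kb ξ ξb hK hKb hKξ hKξb hKKb b hb a' c', coord_basis, if_neg]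
          intro heq
          apply hne
          simp only [Prod.mk.injEq] at heq ⊢
          obtain ⟨ea, rest⟩ := heq
          exact ⟨by rw [← ea, Bool.not_not], rest⟩
        · exact absurd (by subst hT'; exact hB a' c' S' hS') hrep
      · exact absurd (hA (a',c',S',T') hT') hrep)
    rw [LinearMap.mulRight_apply, h1, Module.Basis.coord_apply] at hkey
    rw [LinearMap.mulRight_apply, BKr K Kb ξ ξb hK hKb hKξ hKξb hKKb b hb (!a) c,
      coord_basis] at hkey
    simp only [Bool.not_not] at hkey
    simpa using hkey
  -- Step D' : Kb-toggle
  have hD : ∀ a c : Bool, b.repr x ((a,c,Finset.univ,Finset.univ) :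
      Bool × Bool × Finset (Fin n) × Finset (Fin n))
      = b.repr x (a,!c,Finset.univ,Finset.univ) := by
    intro a c
    have hkey := coord_map_eq b (LinearMap.mulRight ℂ Kb) x (a,c,Finset.univ,Finset.univ)
      (a,!c,Finset.univ,Finset.univ) (by
      rintro ⟨a',c',S',T'⟩ hrep hne
      rw [LinearMap.mulRight_apply]
      by_cases hT' : T' = Finset.univ
      · by_cases hS' : S' = Finset.univ
        · subst hT'; subst hS'
          rw [BKbr K Kb ξ ξb hK hKb hKbξ hKbξb hKKb b hb a' c', coord_basis, if_neg]
          intro heq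
          apply hne
          simp only [Prod.mk.injEq] at heq ⊢
          obtain ⟨ea, ec, rest⟩ := heq
          exact ⟨ea, by rw [← ec, Bool.not_not], rest⟩
        · exact absurd (by subst hT'; exact hB a' c' S' hS') hrep
      · exact absurd (hA (a',c',S',T') hT') hrep)
    rw [LinearMap.mulRight_apply, h2, Module.Basis.coord_apply] at hkey
    rw [LinearMap.mulRight_apply, BKbr K Kb ξ ξb hK hKb hKbξ hKbξb hKKb b hb a (!c),
      coord_basis] at hkey
    simp only [Bool.not_not] at hkey
    simpa using hkey
  -- assemble
  refine ⟨b.repr x (false, false, Finset.univ, Finset.univ), ?_⟩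
  have e10 : b.repr x (true, false, Finset.univ, Finset.univ)
      = b.repr x (false, false, Finset.univ, Finset.univ) := by
    simpa using hC true false
  have e01 : b.repr x (false, true, Finset.univ, Finset.univ)
      = b.repr x (false, false, Finset.univ, Finset.univ) := by
    simpa using hD false true
  have e11 : b.repr x (true, true, Finset.univ, Finset.univ)
      = b.repr x (false, false, Finset.univ, Finset.univ) := by
    have h' := hC true true
    simp only [Bool.not_true] at h'
    rw [h', e01]
  apply b.repr.injective
  rw [map_smul, BLam K Kb ξ ξb hK hKb hKKb b hb, map_add, map_add, map_add,
    Module.Basis.repr_self, Module.Basis.repr_self, Module.Basis.repr_self, Module.Basis.repr_self]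
  ext ⟨a, c, S, T⟩
  rw [Finsupp.smul_apply, Finsupp.add_apply, Finsupp.add_apply, Finsupp.add_apply,
    Finsupp.single_apply, Finsupp.single_apply, Finsupp.single_apply, Finsupp.single_apply]
  by_cases hT : T = Finset.univ
  · subst hT
    by_cases hS : S = Finset.univ
    · subst hS
      cases a <;> cases c <;> simp [e10, e01, e11, smul_eq_mul]
    · have h0' := hB a c S hS
      simp [h0', Ne.symm hS]
  · have h0' := hA (a, c, S, T) hT
    simp [h0', Ne.symm hT]

include hK hKb hξ hξb hKξ hKξb hKbξ hKbξb hKKb hξξ hξbξb hmix hii hb in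
lemma IntLam (ε : A →ₐ[ℂ] ℂ) (hεK : ε K = 1) (hεKb : ε Kb = 1)
    (hεξ : ∀ i, ε (ξ i) = 0) (hεξb : ∀ i, ε (ξb i) = 0) (y : A) :
    y * ((1 + K + Kb + K * Kb) * finsetWord ξ Finset.univ * finsetWord ξb Finset.univ) =
      ε y • ((1 + K + Kb + K * Kb) * finsetWord ξ Finset.univ * finsetWord ξb Finset.univ) ∧
    ((1 + K + Kb + K * Kb) * finsetWord ξ Finset.univ * finsetWord ξb Finset.univ) * y =
      ε y • ((1 + K + Kb + K * Kb) * finsetWord ξ Finset.univ * finsetWord ξb Finset.univ) := by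
  set Λ := (1 + K + Kb + K * Kb) * finsetWord ξ Finset.univ * finsetWord ξb Finset.univ
    with hΛdef
  set P : A → Prop := fun y => y * Λ = ε y • Λ ∧ Λ * y = ε y • Λ with hPdef
  have h1 : P 1 := by constructor <;> simp
  have hmul : ∀ y z, P y → P z → P (y * z) := by
    rintro y z ⟨hy1, hy2⟩ ⟨hz1, hz2⟩
    constructor
    · rw [mul_assoc, hz1, mul_smul_comm, hy1, smul_smul, map_mul, mul_comm (ε y) (ε z)]
    · rw [← mul_assoc, hy2, smul_mul_assoc, hz2, smul_smul, map_mul]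
  have hPK : P K := by
    constructor
    · rw [hεK, one_smul]; exact ZL1 K Kb ξ ξb hK hKb hKKb
    · rw [hεK, one_smul]; exact ZR1 K Kb ξ ξb hK hKb hKξ hKξb hKKb
  have hPKb : P Kb := by
    constructor
    · rw [hεKb, one_smul]; exact ZL2 K Kb ξ ξb hK hKb hKKb
    · rw [hεKb, one_smul]; exact ZR2 K Kb ξ ξb hK hKb hKbξ hKbξb hKKb
  have hPξ : ∀ i, P (ξ i) := by
    intro i
    constructor
    · rw [hεξ i, zero_smul]; exact ZL3 K Kb ξ ξb hξ hKξ hKbξ hξξ i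
    · rw [hεξ i, zero_smul]
      exact ZR3 K Kb ξ ξb hK hKb hξ hKξ hKξb hKbξ hKbξb hKKb hξξ hξbξb hmix hii i
  have hPξb : ∀ i, P (ξb i) := by
    intro i
    constructor
    · rw [hεξb i, zero_smul]
      exact ZL4 K Kb ξ ξb hK hKb hξb hKξ hKξb hKbξ hKbξb hKKb hξξ hξbξb hmix hii i
    · rw [hεξb i, zero_smul]; exact ZR4 K Kb ξ ξb hξb hξbξb i
  have hword : ∀ (f : Fin n → A), (∀ i, P (f i)) → ∀ l : List (Fin n),
      P ((l.map f).prod) := by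
    intro f hf l
    induction l with
    | nil => simpa using h1
    | cons j t ih => simpa using hmul _ _ (hf j) ih
  have hbp : ∀ p, P (b p) := by
    rintro ⟨a, c, S, T⟩
    rw [hb]
    dsimp only
    have hifa : P (if a then K else 1) := by
      cases a
      · exact h1
      · exact hPK
    have hifc : P (if c then Kb else 1) := by
      cases c
      · exact h1
      · exact hPKb
    exact hmul _ _ (hmul _ _ (hmul _ _ hifa hifc) (hword ξ hPξ _)) (hword ξb hPξb _)
  have hM : ∀ y, P y := by
    let M : Submodule ℂ A :=
      { carrier := {y | P y}
        zero_mem' := by constructor <;> simp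
        add_mem' := by
          rintro y z ⟨hy1, hy2⟩ ⟨hz1, hz2⟩
          constructor
          · rw [add_mul, hy1, hz1, map_add, add_smul]
          · rw [mul_add, hy2, hz2, map_add, add_smul]
        smul_mem' := by
          rintro r y ⟨hy1, hy2⟩
          constructor
          · rw [smul_mul_assoc, hy1, map_smul, smul_smul, smul_eq_mul]
          · rw [mul_smul_comm, hy2, map_smul, smul_smul, smul_eq_mul] }
    have hle : Submodule.span ℂ (Set.range ⇑b) ≤ M :=
      Submodule.span_le.mpr (by rintro _ ⟨p, rfl⟩; exact hbp p)
    intro y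
    have hy : y ∈ Submodule.span ℂ (Set.range ⇑b) := by
      rw [b.span_eq]; exact Submodule.mem_top
    exact hle hy
  exact hM y

end main

set_option maxHeartbeats 1000000 in
/-- In `DK_n` (with its word basis and counit), every left integral and every
right integral is a scalar multiple of `(1 + K + K̄ + KK̄)ξ_1⋯ξ_n ξ̄_1⋯ξ̄_n`;
in particular `DK_n` is unimodular for all `n`. -/
theorem stmt5 (n : ℕ) (A : Type*) [Ring A] [Algebra ℂ A]
    (K Kb : A) (ξ ξb : Fin n → A)
    (hK : K ^ 2 = 1) (hKb : Kb ^ 2 = 1)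
    (hξ : ∀ i, ξ i ^ 2 = 0) (hξb : ∀ i, ξb i ^ 2 = 0)
    (hKξ : ∀ i, K * ξ i = -(ξ i * K)) (hKξb : ∀ i, K * ξb i = -(ξb i * K))
    (hKbξ : ∀ i, Kb * ξ i = -(ξ i * Kb)) (hKbξb : ∀ i, Kb * ξb i = -(ξb i * Kb))
    (hKKb : K * Kb = Kb * K)
    (hξξ : ∀ i j, ξ i * ξ j = -(ξ j * ξ i))
    (hξbξb : ∀ i j, ξb i * ξb j = -(ξb j * ξb i))
    (hmix : ∀ i j, i ≠ j → ξ i * ξb j = -(ξb j * ξ i))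
    (hii : ∀ i, ξ i * ξb i = 1 - K * Kb - ξb i * ξ i)
    (ε : A →ₐ[ℂ] ℂ) (hεK : ε K = 1) (hεKb : ε Kb = 1)
    (hεξ : ∀ i, ε (ξ i) = 0) (hεξb : ∀ i, ε (ξb i) = 0)
    (b : Module.Basis (Bool × Bool × Finset (Fin n) × Finset (Fin n)) ℂ A)
    (hb : ∀ p, b p = (if p.1 then K else 1) * (if p.2.1 then Kb else 1) *
      finsetWord ξ p.2.2.1 * finsetWord ξb p.2.2.2) :
    (∀ x : A, (∀ y, y * x = ε y • x) →
        ∃ c : ℂ, x = c • ((1 + K + Kb + K * Kb) *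
          finsetWord ξ Finset.univ * finsetWord ξb Finset.univ)) ∧
      (∀ x : A, (∀ y, x * y = ε y • x) →
        ∃ c : ℂ, x = c • ((1 + K + Kb + K * Kb) *
          finsetWord ξ Finset.univ * finsetWord ξb Finset.univ)) ∧
      {x : A | ∀ y, y * x = ε y • x} = {x : A | ∀ y, x * y = ε y • x} := by
  have hLC : ∀ x : A, (∀ y, y * x = ε y • x) →
      ∃ c : ℂ, x = c • ((1 + K + Kb + K * Kb) *
        finsetWord ξ Finset.univ * finsetWord ξb Finset.univ) := by
    intro x hx
    exact LeftChar K Kb ξ ξb hK hKb hξ hξb hKξ hKξb hKbξ hKbξb hKKb hξξ hξbξb hmix hii b hb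
      x (by rw [hx K, hεK, one_smul]) (by rw [hx Kb, hεKb, one_smul])
      (fun i => by rw [hx (ξ i), hεξ i, zero_smul])
      (fun i => by rw [hx (ξb i), hεξb i, zero_smul])
  have hRC : ∀ x : A, (∀ y, x * y = ε y • x) →
      ∃ c : ℂ, x = c • ((1 + K + Kb + K * Kb) *
        finsetWord ξ Finset.univ * finsetWord ξb Finset.univ) := by
    intro x hx
    exact RightChar K Kb ξ ξb hK hKb hξ hξb hKξ hKξb hKbξ hKbξb hKKb hξξ hξbξb hmix hii b hb
      x (by rw [hx K, hεK, one_smul]) (by rw [hx Kb, hεKb, one_smul])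
      (fun i => by rw [hx (ξ i), hεξ i, zero_smul])
      (fun i => by rw [hx (ξb i), hεξb i, zero_smul])
  have hI := fun y => IntLam K Kb ξ ξb hK hKb hξ hξb hKξ hKξb hKbξ hKbξb hKKb hξξ hξbξb
    hmix hii b hb ε hεK hεKb hεξ hεξb y
  refine ⟨hLC, hRC, ?_⟩
  ext x
  simp only [Set.mem_setOf_eq]
  constructor
  · intro hx
    obtain ⟨c, rfl⟩ := hLC x hx
    intro y
    rw [smul_mul_assoc, (hI y).2, smul_comm]
  · intro hx
    obtain ⟨c, rfl⟩ := hRC x hx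
    intro y
    rw [mul_smul_comm, (hI y).1, smul_comm]
end

section
/- Let e_K = c(1 + K − K̄ − KK̄)ξ_1⋯ξ_n ξ̄_1⋯ξ̄_n in DK_n, where c = (−1)^{⌊n/2⌋}/2^{n+2}. Then e_K is an idempotent: e_K² = e_K. -/
section Aux
variable {A : Type*} [Ring A] {ι : Type*}

lemma swap_ext {x y : A} {s : ℤ} (h : x * y = s • (y * x)) (m : A) :
    x * (y * m) = s • (y * (x * m)) := by
  rw [← mul_assoc, h, smul_mul_assoc, mul_assoc]

lemma swap_flip {x y : A} {k : ℕ} (h : x * y = (-1:ℤ)^k • (y * x)) :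
    y * x = (-1:ℤ)^k • (x * y) := by
  rw [h, smul_smul, ← pow_add, Even.neg_one_pow ⟨k, rfl⟩, one_smul]

lemma list_anticomm (g : A) (f : ι → A) (l : List ι)
    (h : ∀ i ∈ l, g * f i = -(f i * g)) :
    g * (l.map f).prod = (-1:ℤ)^l.length • ((l.map f).prod * g) := by
  induction l with
  | nil => simp
  | cons a t ih =>
    have ha : g * f a = -(f a * g) := h a (by simp)
    have ih' := ih (fun i hi => h i (by simp [hi]))
    simp only [List.map_cons, List.prod_cons, List.length_cons]
    rw [← mul_assoc, ha, neg_mul, mul_assoc, ih', mul_smul_comm, pow_succ,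
      mul_smul, neg_one_smul, smul_neg, mul_assoc]

end Aux

lemma nat_tri (k : ℕ) : k + k*(k-1)/2 = (k+1)*k/2 := by
  cases k with
  | zero => rfl
  | succ m =>
    have h1 : (m+1+1)*(m+1) = (m+1)*m + 2*(m+1) := by ring
    obtain ⟨r, hr⟩ := Nat.even_mul_succ_self m
    have hr' : (m+1)*m = r + r := by rw [mul_comm]; exact hr
    simp only [Nat.add_sub_cancel]
    omega

lemma main_list {n : ℕ} {A : Type*} [Ring A] (K Kb : A) (ξ ξb : Fin n → A)
    (hξ : ∀ i, ξ i ^ 2 = 0)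
    (hKξ : ∀ i, K * ξ i = -(ξ i * K)) (hKbξ : ∀ i, Kb * ξ i = -(ξ i * Kb))
    (hξξ : ∀ i j, ξ i * ξ j = -(ξ j * ξ i))
    (hmix : ∀ i j, i ≠ j → ξ i * ξb j = -(ξb j * ξ i))
    (hii : ∀ i, ξ i * ξb i = 1 - K * Kb - ξb i * ξ i)
    (l : List (Fin n)) (hnd : l.Nodup) :
    (l.map ξ).prod * ((l.map ξb).prod * (l.map ξ).prod) =
      (-1:ℤ)^(l.length * (l.length - 1) / 2) •
        ((1 - K * Kb)^l.length * (l.map ξ).prod) := by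
  have hwc : ∀ i, Commute (1 - K*Kb) (ξ i) := by
    intro i
    have hz : K * Kb * ξ i = ξ i * (K * Kb) := by
      rw [mul_assoc, hKbξ i, mul_neg, ← mul_assoc, hKξ i, neg_mul, neg_neg,
        mul_assoc]
    exact (Commute.one_left (ξ i)).sub_left hz
  induction l with
  | nil => simp
  | cons a t ih =>
    rw [List.nodup_cons] at hnd
    obtain ⟨ha, hndt⟩ := hnd
    have iht := ih hndt
    set p := (t.map ξ).prod with hp
    set q := (t.map ξb).prod with hq
    set k := t.length with hk
    set w : A := 1 - K * Kb with hw
    -- swap facts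
    have sw1 : ξb a * p = (-1:ℤ)^k • (p * ξb a) := by
      refine list_anticomm (ξb a) ξ t (fun i hi => ?_)
      have hne : i ≠ a := fun hia => ha (hia ▸ hi)
      rw [hmix i a hne, neg_neg]
    have sw2 : ξ a * p = (-1:ℤ)^k • (p * ξ a) :=
      list_anticomm (ξ a) ξ t (fun i _ => hξξ a i)
    have sw3 : ξ a * q = (-1:ℤ)^k • (q * ξ a) := by
      refine list_anticomm (ξ a) ξb t (fun i hi => ?_)
      have hne : a ≠ i := fun hia => ha (hia ▸ hi)
      exact hmix a i hne
    have hs2 : ∀ x : A, (-1:ℤ)^k • (-1:ℤ)^k • x = x := by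
      intro x
      rw [smul_smul, ← pow_add, Even.neg_one_pow ⟨k, rfl⟩, one_smul]
    simp only [List.map_cons, List.prod_cons, List.length_cons, ← hp, ← hq, ← hk]
    -- step 1 : full right association
    rw [mul_assoc (ξ a) p _, mul_assoc (ξb a) q _]
    -- now : ξ a * (p * (ξb a * (q * (ξ a * p))))
    rw [swap_ext (swap_flip sw1) (q * (ξ a * p))]
    -- inner : p * (q * (ξ a * p)) = ξ a * (p * (q * p))
    have inner : p * (q * (ξ a * p)) = ξ a * (p * (q * p)) := by
      rw [swap_ext (swap_flip sw3) p, mul_smul_comm,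
        swap_ext (swap_flip sw2) (q * p), hs2]
    rw [mul_smul_comm, inner]
    -- collapse ξ a * (ξb a * (ξ a * N))
    have collapse : ∀ N : A, ξ a * (ξb a * (ξ a * N)) = w * (ξ a * N) := by
      intro N
      rw [← mul_assoc, hii a, sub_mul, mul_assoc (ξb a) (ξ a) _,
        ← mul_assoc (ξ a) (ξ a) N, ← pow_two, hξ a, zero_mul, mul_zero,
        sub_zero]
    rw [collapse, iht]
    rw [mul_smul_comm, mul_smul_comm, smul_smul]
    have hmove : ξ a * (w^k * p) = w^k * (ξ a * p) := by
      rw [← mul_assoc, ← ((hwc a).pow_left k).eq, mul_assoc]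
    rw [hmove, ← mul_assoc, ← pow_succ', ← pow_add]
    congr 2
    simp only [Nat.add_sub_cancel]
    exact nat_tri k

lemma par_lemma (n : ℕ) : (-1:ℂ)^(n*(n-1)/2) = (-1:ℂ)^(n/2) := by
  induction n using Nat.strong_induction_on with
  | _ n ih =>
    rcases lt_or_ge n 4 with h | h
    · interval_cases n <;> norm_num
    · obtain ⟨m, rfl⟩ : ∃ m, n = m + 4 := ⟨n - 4, by omega⟩
      have ihm := ih m (by omega)
      have h1 : (m+4)*(m+4-1) = m*(m-1) + 8*m + 12 := by
        cases m with
        | zero => rfl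
        | succ j =>
          have hj : j+1-1 = j := rfl
          show (j+5)*(j+4) = (j+1)*(j+1-1) + 8*(j+1) + 12
          rw [hj]; ring
      obtain ⟨r, hr⟩ : Even (m*(m-1)) := by
        rcases m with _ | j
        · simp
        · have hh : (j+1) * (j+1-1) = j*(j+1) := by
            rw [Nat.add_sub_cancel, mul_comm]
          rw [hh]; exact Nat.even_mul_succ_self j
      have h6 : (m+4)*(m+4-1)/2 = m*(m-1)/2 + (4*m+6) := by omega
      have h5 : (m+4)/2 = m/2 + 2 := by omega
      rw [h6, h5, pow_add (-1:ℂ) (m*(m-1)/2), ihm,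
        Even.neg_one_pow (⟨2*m+3, by ring⟩ : Even (4*m+6)), mul_one, pow_add]
      norm_num


/-- In `DK_n`, the element
`e_K = ((-1)^{⌊n/2⌋}/2^{n+2})(1 + K - K̄ - KK̄)ξ_1⋯ξ_n ξ̄_1⋯ξ̄_n` is an
idempotent. -/
theorem stmt6 (n : ℕ) (A : Type*) [Ring A] [Algebra ℂ A]
    (K Kb : A) (ξ ξb : Fin n → A)
    (hK : K ^ 2 = 1) (hKb : Kb ^ 2 = 1)
    (hξ : ∀ i, ξ i ^ 2 = 0) (hξb : ∀ i, ξb i ^ 2 = 0)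
    (hKξ : ∀ i, K * ξ i = -(ξ i * K)) (hKξb : ∀ i, K * ξb i = -(ξb i * K))
    (hKbξ : ∀ i, Kb * ξ i = -(ξ i * Kb)) (hKbξb : ∀ i, Kb * ξb i = -(ξb i * Kb))
    (hKKb : K * Kb = Kb * K)
    (hξξ : ∀ i j, ξ i * ξ j = -(ξ j * ξ i))
    (hξbξb : ∀ i j, ξb i * ξb j = -(ξb j * ξb i))
    (hmix : ∀ i j, i ≠ j → ξ i * ξb j = -(ξb j * ξ i))
    (hii : ∀ i, ξ i * ξb i = 1 - K * Kb - ξb i * ξ i)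
    (e : A)
    (he : e = (((-1 : ℂ) ^ (n / 2)) / 2 ^ (n + 2)) •
      ((1 + K - Kb - K * Kb) *
        finsetWord ξ Finset.univ * finsetWord ξb Finset.univ)) :
    e * e = e := by
  classical
  set L : List (Fin n) := Finset.sort Finset.univ (· ≤ ·) with hL
  have hnd : L.Nodup := Finset.sort_nodup _ _
  have hlen : L.length = n := by
    rw [hL, Finset.length_sort, Finset.card_univ, Fintype.card_fin]
  have hfw : finsetWord ξ Finset.univ = (L.map ξ).prod := rfl
  have hfwb : finsetWord ξb Finset.univ = (L.map ξb).prod := rfl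
  rw [he, hfw, hfwb]
  set X := (L.map ξ).prod with hXdef
  set Y := (L.map ξb).prod with hYdef
  set P : A := 1 + K - Kb - K * Kb with hPdef
  set c : ℂ := ((-1 : ℂ) ^ (n / 2)) / 2 ^ (n + 2) with hcdef
  have hKK : K * K = 1 := by rw [← pow_two]; exact hK
  have hKbKb : Kb * Kb = 1 := by rw [← pow_two]; exact hKb
  -- commutation of K, Kb with X * Y
  have cKX := list_anticomm K ξ L (fun i _ => hKξ i)
  have cKY := list_anticomm K ξb L (fun i _ => hKξb i)
  have cKbX := list_anticomm Kb ξ L (fun i _ => hKbξ i)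
  have cKbY := list_anticomm Kb ξb L (fun i _ => hKbξb i)
  rw [hlen] at cKX cKY cKbX cKbY
  have cK : Commute K (X * Y) := by
    show K * (X * Y) = (X * Y) * K
    rw [← mul_assoc, cKX, smul_mul_assoc, mul_assoc X K Y, cKY, mul_smul_comm,
      smul_smul, ← pow_add, Even.neg_one_pow ⟨n, rfl⟩, one_smul, mul_assoc]
  have cKb : Commute Kb (X * Y) := by
    show Kb * (X * Y) = (X * Y) * Kb
    rw [← mul_assoc, cKbX, smul_mul_assoc, mul_assoc X Kb Y, cKbY, mul_smul_comm,
      smul_smul, ← pow_add, Even.neg_one_pow ⟨n, rfl⟩, one_smul, mul_assoc]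
  have hPC : Commute P (X * Y) :=
    (((Commute.one_left (X * Y)).add_left cK).sub_left cKb).sub_left
      (cK.mul_left cKb)
  -- P * P = 4 * P
  have e2 : (1 - Kb) * (1 + K) = (1 + K) * (1 - Kb) := by
    have h1 : (1 - Kb) * (1 + K) = 1 + K - Kb - Kb * K := by noncomm_ring
    have h2 : (1 + K) * (1 - Kb) = 1 + K - Kb - K * Kb := by noncomm_ring
    rw [h1, h2, hKKb]
  have e3 : (1 + K) * (1 + K) = 2 * (1 + K) := by
    have h : (1 + K) * (1 + K) = 1 + K + K + K * K := by noncomm_ring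
    rw [h, hKK]; noncomm_ring
  have e4 : (1 - Kb) * (1 - Kb) = 2 * (1 - Kb) := by
    have h : (1 - Kb) * (1 - Kb) = 1 - Kb - Kb + Kb * Kb := by noncomm_ring
    rw [h, hKbKb]; noncomm_ring
  have e1 : P = (1 + K) * (1 - Kb) := by rw [hPdef]; noncomm_ring
  have hP2 : P * P = 4 * P := by
    rw [e1]
    calc ((1+K)*(1-Kb))*((1+K)*(1-Kb))
        = (1+K)*(((1-Kb)*(1+K))*(1-Kb)) := by noncomm_ring
      _ = (1+K)*(((1+K)*(1-Kb))*(1-Kb)) := by rw [e2]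
      _ = ((1+K)*(1+K))*((1-Kb)*(1-Kb)) := by noncomm_ring
      _ = (2*(1+K))*(2*(1-Kb)) := by rw [e3, e4]
      _ = 4*((1+K)*(1-Kb)) := by noncomm_ring
  -- P * (1 - K*Kb) = 2 * P
  have z1 : K * (K * Kb) = Kb := by rw [← mul_assoc, hKK, one_mul]
  have z2 : Kb * (K * Kb) = K := by rw [hKKb, ← mul_assoc, hKbKb, one_mul]
  have z3 : (K * Kb) * (K * Kb) = 1 := by rw [mul_assoc, z2, hKK]
  have hPz : P * (K * Kb) = -P := by
    have h : P * (K * Kb) =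
        K * Kb + K * (K * Kb) - Kb * (K * Kb) - (K * Kb) * (K * Kb) := by
      rw [hPdef]; noncomm_ring
    rw [h, z1, z2, z3, hPdef]; noncomm_ring
  have hPw : P * (1 - K * Kb) = 2 * P := by
    have h : P * (1 - K * Kb) = P - P * (K * Kb) := by noncomm_ring
    rw [h, hPz]; noncomm_ring
  have hPwn : ∀ m : ℕ, P * (1 - K * Kb) ^ m = 2 ^ m * P := by
    intro m
    induction m with
    | zero => simp
    | succ j ihj =>
      rw [pow_succ, ← mul_assoc, ihj, mul_assoc, hPw, ← mul_assoc, ← pow_succ]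
  -- the main relation
  have hmain := main_list K Kb ξ ξb hξ hKξ hKbξ hξξ hmix hii L hnd
  rw [hlen] at hmain
  rw [← hXdef, ← hYdef] at hmain
  -- square of P * X * Y
  have hBB : (P*X*Y)*(P*X*Y) =
      (-1:ℤ)^(n*(n-1)/2) • ((2:A)^(n+2) * (P*X*Y)) := by
    rw [mul_assoc P X Y]
    calc (P*(X*Y))*(P*(X*Y))
        = P*(((X*Y)*P)*(X*Y)) := by noncomm_ring
      _ = P*((P*(X*Y))*(X*Y)) := by rw [← hPC.eq]
      _ = (P*P)*((X*Y)*(X*Y)) := by noncomm_ring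
      _ = (4*P)*((X*(Y*X))*Y) := by
          rw [hP2]
          have hassoc : (X*Y)*(X*Y) = (X*(Y*X))*Y := by noncomm_ring
          rw [hassoc]
      _ = (4*P)*((((-1:ℤ)^(n*(n-1)/2) • ((1 - K*Kb)^n * X)))*Y) := by
          rw [hmain]
      _ = (-1:ℤ)^(n*(n-1)/2) • ((4*P)*(((1 - K*Kb)^n * X)*Y)) := by
          rw [smul_mul_assoc, mul_smul_comm]
      _ = (-1:ℤ)^(n*(n-1)/2) • ((2:A)^(n+2) * (P*(X*Y))) := by
          congr 1
          have h : (4*P)*(((1 - K*Kb)^n * X)*Y) =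
              4*((P*(1 - K*Kb)^n)*(X*Y)) := by noncomm_ring
          rw [h, hPwn n, pow_add]
          have h4 : (2:A)^2 = 4 := by norm_num
          rw [h4]
          noncomm_ring
  rw [smul_mul_assoc, mul_smul_comm, smul_smul, hBB]
  rw [← Int.cast_smul_eq_zsmul ℂ, Int.cast_pow, Int.cast_neg, Int.cast_one]
  have h2s : ((2:A)^(n+2)) * (P*X*Y) = ((2:ℂ)^(n+2)) • (P*X*Y) := by
    rw [Algebra.smul_def, map_pow, map_ofNat]
  rw [h2s, smul_smul, smul_smul]
  have hsc : c * c * (-1:ℂ)^(n*(n-1)/2) * (2:ℂ)^(n+2) = c := by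
    rw [par_lemma n, hcdef]
    have hT : ((2:ℂ)^(n+2)) ≠ 0 := pow_ne_zero _ two_ne_zero
    have hd : ((-1:ℂ)^(n/2))*((-1:ℂ)^(n/2)) = 1 := by
      rw [← pow_add, Even.neg_one_pow ⟨n/2, rfl⟩]
    have hcube : ((-1:ℂ)^(n/2))^3 = (-1:ℂ)^(n/2) := by
      rw [show ((-1:ℂ)^(n/2))^3 = ((-1:ℂ)^(n/2)*(-1)^(n/2))*(-1)^(n/2) from by
        ring, hd, one_mul]
    field_simp
    linear_combination hd
  rw [hsc]
end

section
/- For any finite tensor category C, if the tensor unit 1 is a projective object, then C is semisimple. -/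
open CategoryTheory CategoryTheory.Limits CategoryTheory.MonoidalCategory

/-- A (pre)additive category is semisimple if every object is a finite
biproduct of simple objects. -/
def CatSemisimple (C : Type*) [Category C] [Preadditive C]
    [HasFiniteBiproducts C] : Prop :=
  ∀ X : C, ∃ (k : ℕ) (f : Fin k → C), (∀ i, Simple (f i)) ∧ Nonempty (X ≅ ⨁ f)

section Aux

variable {C : Type*} [Category C] [Preadditive C] [HasFiniteBiproducts C]

attribute [local instance] hasBinaryBiproducts_of_finite_biproducts

/-- The biproduct over a sum type is the binary biproduct of the biproducts. -/
noncomputable def sumBiproductIso {J K : Type} [Fintype J] [Fintype K]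
    (g : J → C) (h : K → C) : ⨁ (Sum.elim g h) ≅ (⨁ g) ⊞ (⨁ h) where
  hom := biprod.lift (biproduct.lift fun j => biproduct.π _ (Sum.inl j))
    (biproduct.lift fun k => biproduct.π _ (Sum.inr k))
  inv := biprod.desc
    (biproduct.lift fun s => Sum.rec (motive := fun s => (⨁ g ⟶ Sum.elim g h s))
      (fun j => biproduct.π g j) (fun _ => 0) s)
    (biproduct.lift fun s => Sum.rec (motive := fun s => (⨁ h ⟶ Sum.elim g h s))
      (fun _ => 0) (fun k => biproduct.π h k) s)
  hom_inv_id := by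
    apply biproduct.hom_ext
    rintro (j | k) <;>
      simp [Preadditive.add_comp, Preadditive.comp_add] <;>
      refine (Preadditive.add_comp _ _ _ _ _ _).trans ?_ <;>
      refine (congrArg₂ (· + ·) (Category.assoc _ _ _) (Category.assoc _ _ _)).trans ?_ <;>
      refine (congrArg₂ (· + ·) (congrArg (fun t => _ ≫ t) (biproduct.lift_π _ _))
        (congrArg (fun t => _ ≫ t) (biproduct.lift_π _ _))).trans ?_ <;>
      refine Eq.trans ?_ (Category.id_comp _).symm
    · exact (congrArg₂ (fun a b : (⨁ Sum.elim g h ⟶ g j) => a + b)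
      (biproduct.lift_π (f := g) (fun j' => biproduct.π (Sum.elim g h) (Sum.inl j')) j)
      Limits.comp_zero).trans (add_zero _)
    · exact (congrArg₂ (fun a b : (⨁ Sum.elim g h ⟶ h k) => a + b)
      Limits.comp_zero
      (biproduct.lift_π (f := h) (fun k' => biproduct.π (Sum.elim g h) (Sum.inr k')) k)).trans (zero_add _)
  inv_hom_id := by
    apply biprod.hom_ext' <;> apply biprod.hom_ext <;>
      apply biproduct.hom_ext <;> intro j <;> simp <;>
      exact (congrArg (fun t => _ ≫ t) (biproduct.lift_π _ _)).trans (biproduct.lift_π _ _)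

theorem finrank_lt_of_biprod [Linear ℂ C]
    [∀ X Y : C, FiniteDimensional ℂ (X ⟶ Y)] {X Y Z : C}
    (e : X ≅ Y ⊞ Z) (hZ : 𝟙 Z ≠ 0) :
    Module.finrank ℂ (Y ⟶ Y) < Module.finrank ℂ (X ⟶ X) := by
  classical
  let ψ : ((Y ⟶ Y) × (Z ⟶ Z)) →ₗ[ℂ] (X ⟶ X) :=
    { toFun := fun p =>
        e.hom ≫ (biprod.fst ≫ p.1 ≫ biprod.inl + biprod.snd ≫ p.2 ≫ biprod.inr) ≫ e.inv
      map_add' := by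
        intro p q
        simp only [Prod.fst_add, Prod.snd_add, Preadditive.add_comp, Preadditive.comp_add]
        abel
      map_smul' := by
        intro c p
        simp only [Prod.smul_fst, Prod.smul_snd, Linear.smul_comp, Linear.comp_smul,
          Preadditive.comp_add, Preadditive.add_comp, RingHom.id_apply, smul_add] }
  have hrec : ∀ p : ((Y ⟶ Y) × (Z ⟶ Z)),
      (biprod.inl ≫ e.inv ≫ ψ p ≫ e.hom ≫ biprod.fst = p.1) ∧
      (biprod.inr ≫ e.inv ≫ ψ p ≫ e.hom ≫ biprod.snd = p.2) := by
    intro p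
    constructor <;>
      simp [ψ, Preadditive.comp_add, Preadditive.add_comp]
  have hinj : Function.Injective ψ := by
    intro p q hpq
    have h1 := (hrec p).1
    have h2 := (hrec p).2
    rw [hpq, (hrec q).1] at h1
    rw [hpq, (hrec q).2] at h2
    exact Prod.ext h1.symm h2.symm
  have hle := LinearMap.finrank_le_finrank_of_injective hinj
  rw [Module.finrank_prod] at hle
  have hpos : 0 < Module.finrank ℂ (Z ⟶ Z) := by
    haveI : Nontrivial (Z ⟶ Z) := ⟨𝟙 Z, 0, hZ⟩
    exact Module.finrank_pos
  omega

end Aux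

/-- For a finite tensor category `C` (a finite rigid `ℂ`-linear abelian
monoidal category), if the tensor unit is projective then `C` is semisimple. -/
theorem stmt7 (C : Type*) [Category C] [Abelian C] [HasFiniteBiproducts C] [Linear ℂ C]
    [MonoidalCategory C] [MonoidalPreadditive C] [MonoidalLinear ℂ C]
    [RigidCategory C] [EnoughProjectives C]
    [∀ X Y : C, FiniteDimensional ℂ (X ⟶ Y)]
    (h : Projective (𝟙_ C)) :
    CatSemisimple C := by
  classical
  -- Step 1: every object is projective.
  have allP : ∀ X : C, Projective X := by
    intro X
    haveI : (tensorRight (Xᘁ)).IsLeftAdjoint :=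
      ⟨_, ⟨tensorRightAdjunction (Xᘁ) (HasRightDual.rightDual (Xᘁ))⟩⟩
    have hp : Projective ((tensorRight X).obj (𝟙_ C)) :=
      (tensorRightAdjunction X (Xᘁ)).map_projective _ h
    exact Projective.of_iso (show 𝟙_ C ⊗ X ≅ X from λ_ X) hp
  -- Step 2: strong induction on the dimension of the endomorphism algebra.
  have key : ∀ (n : ℕ) (X : C), Module.finrank ℂ (X ⟶ X) ≤ n →
      ∃ (k : ℕ) (f : Fin k → C), (∀ i, Simple (f i)) ∧ Nonempty (X ≅ ⨁ f) := by
    intro n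
    induction n using Nat.strong_induction_on with
    | _ n ih =>
      intro X hn
      by_cases hX : IsZero X
      · refine ⟨0, Fin.elim0, fun i => i.elim0, ⟨hX.iso ?_⟩⟩
        rw [IsZero.iff_id_eq_zero]
        apply biproduct.hom_ext
        intro i
        exact i.elim0
      by_cases hs : Simple X
      · exact ⟨1, fun _ => X, fun _ => hs, ⟨(biproductUniqueIso fun _ : Fin 1 => X).symm⟩⟩
      -- X is nonzero and not simple: find a proper nonzero subobject.
      have hn' : ¬ ∀ (Y : C) (f : Y ⟶ X), Mono f → (IsIso f ↔ f ≠ 0) := by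
        intro H
        exact hs ⟨fun {Y} f hf => H Y f hf⟩
      push_neg at hn'
      obtain ⟨Y, f, hmono, hniff⟩ := hn'
      haveI : Mono f := hmono
      obtain ⟨hi, hf⟩ | ⟨hfiso, hf0⟩ := hniff
      · exfalso
        apply hX
        rw [IsZero.iff_id_eq_zero]
        haveI : Epi f := inferInstance
        apply (cancel_epi f).mp
        rw [hf]
        simp
      -- split X as Y ⊞ cokernel f
      haveI : IsSplitEpi (cokernel.π f) :=
        ⟨⟨{ section_ := Projective.factorThru (𝟙 _) (cokernel.π f)
            id := Projective.factorThru_comp _ _ }⟩⟩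
      haveI : IsSplitEpi
          (Cofork.π (CokernelCofork.ofπ (cokernel.π f) (cokernel.condition f))) :=
        ‹IsSplitEpi (cokernel.π f)›
      let i := Abelian.monoIsKernelOfCokernel
        (CokernelCofork.ofπ (cokernel.π f) (cokernel.condition f)) (cokernelIsCokernel f)
      have e : X ≅ Y ⊞ cokernel f :=
        biprod.uniqueUpToIso Y (cokernel f)
          (isBilimitBinaryBiconeOfIsSplitEpiOfKernel i)
      have hY1 : 𝟙 Y ≠ 0 := by
        intro h1
        apply hf0
        rw [← Category.id_comp f, h1, Limits.zero_comp]
      have hZ1 : 𝟙 (cokernel f) ≠ 0 := by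
        intro h1
        apply hfiso
        have hπ : cokernel.π f = 0 := by
          rw [← Category.comp_id (cokernel.π f), h1, Limits.comp_zero]
        haveI : Epi f := Abelian.epi_of_cokernel_π_eq_zero f hπ
        exact isIso_of_mono_of_epi f
      have d1 : Module.finrank ℂ (Y ⟶ Y) < Module.finrank ℂ (X ⟶ X) :=
        finrank_lt_of_biprod e hZ1
      have d2 : Module.finrank ℂ (cokernel f ⟶ cokernel f) < Module.finrank ℂ (X ⟶ X) :=
        finrank_lt_of_biprod (e ≪≫ biprod.braiding Y (cokernel f)) hY1
      obtain ⟨k1, g, hg, ⟨e1⟩⟩ :=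
        ih (Module.finrank ℂ (Y ⟶ Y)) (lt_of_lt_of_le d1 hn) Y le_rfl
      obtain ⟨k2, g', hg', ⟨e2⟩⟩ :=
        ih (Module.finrank ℂ (cokernel f ⟶ cokernel f)) (lt_of_lt_of_le d2 hn)
          (cokernel f) le_rfl
      refine ⟨k1 + k2, Sum.elim g g' ∘ finSumFinEquiv.symm, ?_, ?_⟩
      · intro i
        rcases hsp : finSumFinEquiv.symm i with j | j
        · have : (Sum.elim g g' ∘ ⇑finSumFinEquiv.symm) i = g j := by
            simp [hsp]
          rw [this]; exact hg j
        · have : (Sum.elim g g' ∘ ⇑finSumFinEquiv.symm) i = g' j := by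
            simp [hsp]
          rw [this]; exact hg' j
      · refine ⟨e ≪≫ biprod.mapIso e1 e2 ≪≫ (sumBiproductIso g g').symm ≪≫ ?_⟩
        exact (biproduct.whiskerEquiv (f := Sum.elim g g' ∘ finSumFinEquiv.symm)
          (g := Sum.elim g g') finSumFinEquiv.symm (fun j => Iso.refl _)).symm
  exact fun X => key _ X le_rfl
end

section
/- For every nonnegative integer k and integer n with n/2 an integer: Σ_{ℓ=0}^{k} C(k,ℓ)(−1)^{⌊(n−ℓ)/2⌋ + ⌊(k−ℓ+1)/2⌋ + ℓ(k−ℓ)} = (−1)^{n/2 + ⌊(k+1)/2⌋} 2^k, and Σ_{ℓ=0}^{k} C(k,ℓ)(−1)^{⌊(n−ℓ)/2⌋ + ⌊(k−ℓ+1)/2⌋ + ℓ(k−ℓ) + ℓ} = (−1)^{n/2} if k = 0 and 0 if k > 0. -/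
/-!
For even `n` and `ℓ ≤ k ≤ n` the parity of `⌊(n-ℓ)/2⌋ + ⌊(k-ℓ+1)/2⌋ + ℓ(k-ℓ)` does not
depend on `ℓ`: replacing `ℓ` by `ℓ + 2` lowers both floors by one and keeps the parity of
`ℓ(k-ℓ)`, and `ℓ = 1` agrees with `ℓ = 0` because `ℓ(k-ℓ) = k-1` there. So the sign factors
out of both sums, which become `Σ C(k,ℓ) = 2^k` and `Σ (-1)^ℓ C(k,ℓ) = δ_{k,0}`.
-/

lemma sign_exponent_mod_two {n k ℓ : ℕ} (hn : Even n) (hk : k ≤ n) (hℓ : ℓ ≤ k) :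
    ((n - ℓ) / 2 + (k - ℓ + 1) / 2 + ℓ * (k - ℓ)) % 2 = (n / 2 + (k + 1) / 2) % 2 := by
  obtain ⟨m, rfl⟩ := hn
  obtain ⟨r, rfl⟩ := Nat.exists_eq_add_of_le hℓ
  rw [Nat.add_sub_cancel_left]
  obtain ⟨j, rfl | rfl⟩ := Nat.even_or_odd' ℓ
  · rw [show 2 * j * r = 2 * (j * r) by ring]
    omega
  · rw [show (2 * j + 1) * r = r + 2 * (j * r) by ring]
    obtain ⟨t, rfl | rfl⟩ := Nat.even_or_odd' r <;> omega

lemma neg_one_pow_sign_exponent {n k ℓ : ℕ} (hn : Even n) (hk : k ≤ n) (hℓ : ℓ ≤ k) :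
    (-1 : ℤ) ^ ((n - ℓ) / 2 + (k - ℓ + 1) / 2 + ℓ * (k - ℓ)) =
      (-1) ^ (n / 2 + (k + 1) / 2) := by
  rw [neg_one_pow_eq_pow_mod_two, sign_exponent_mod_two hn hk hℓ, ← neg_one_pow_eq_pow_mod_two]

/-- Sign identities used in computing the Higman trace `τ(e_K)` in the doubled
Nichols Hopf algebra: for even `n` and `0 ≤ k ≤ n`,
`Σ_ℓ C(k,ℓ)(-1)^{⌊(n-ℓ)/2⌋+⌊(k-ℓ+1)/2⌋+ℓ(k-ℓ)} = (-1)^{n/2+⌊(k+1)/2⌋} 2^k` and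
`Σ_ℓ C(k,ℓ)(-1)^{⌊(n-ℓ)/2⌋+⌊(k-ℓ+1)/2⌋+ℓ(k-ℓ)+ℓ} = (-1)^{n/2} δ_{k=0}`. -/
theorem stmt15 (n k : ℕ) (hn : Even n) (hk : k ≤ n) :
    (∑ ℓ ∈ Finset.range (k + 1),
        (Nat.choose k ℓ : ℤ) *
          (-1 : ℤ) ^ ((n - ℓ) / 2 + (k - ℓ + 1) / 2 + ℓ * (k - ℓ)))
      = (-1 : ℤ) ^ (n / 2 + (k + 1) / 2) * 2 ^ k ∧
    (∑ ℓ ∈ Finset.range (k + 1),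
        (Nat.choose k ℓ : ℤ) *
          (-1 : ℤ) ^ ((n - ℓ) / 2 + (k - ℓ + 1) / 2 + ℓ * (k - ℓ) + ℓ))
      = if k = 0 then (-1 : ℤ) ^ (n / 2) else 0 := by
  set s : ℤ := (-1) ^ (n / 2 + (k + 1) / 2)
  have hsign : ∀ ℓ ∈ Finset.range (k + 1),
      (-1 : ℤ) ^ ((n - ℓ) / 2 + (k - ℓ + 1) / 2 + ℓ * (k - ℓ)) = s := fun ℓ hℓ =>
    neg_one_pow_sign_exponent hn hk (Finset.mem_range_succ_iff.mp hℓ)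
  constructor
  · calc _ = ∑ ℓ ∈ Finset.range (k + 1), (Nat.choose k ℓ : ℤ) * s :=
          Finset.sum_congr rfl fun ℓ hℓ => by rw [hsign ℓ hℓ]
      _ = s * 2 ^ k := by
          rw [← Finset.sum_mul, ← Nat.cast_sum, Nat.sum_range_choose]
          push_cast
          ring
  · calc _ = s * ∑ ℓ ∈ Finset.range (k + 1), (-1 : ℤ) ^ ℓ * (Nat.choose k ℓ : ℤ) := by
          rw [Finset.mul_sum]
          exact Finset.sum_congr rfl fun ℓ hℓ => by rw [pow_add, hsign ℓ hℓ]; ring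
      _ = _ := by
          rw [Int.alternating_sum_range_choose]
          split_ifs with hk0 <;> simp [s, hk0]
end

section
/- Let n be an even positive integer, S_CW = (−1)^{n/2}·[[0, 2^{−n}, −2^{−n}], [2^{n−1}, 1/2, 1/2], [−2^{n−1}, 1/2, 1/2]], and let N^{KK̄} = [[1,0,0],[0,0,1],[0,1,0]] and N^K = [[0,1,1],[2^{2n−1},0,0],[2^{2n−1},0,0]]. Then S_CW·N^{KK̄}·S_CW⁻¹ = diag(−1,1,1) and S_CW·N^K·S_CW⁻¹ = diag(0, 2^n, −2^n). -/
lemma smul3_aux (r a b c d e f g h i : ℂ) :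
    r • !![a, b, c; d, e, f; g, h, i] = !![r*a, r*b, r*c; r*d, r*e, r*f; r*g, r*h, r*i] := by
  ext i j
  fin_cases i <;> fin_cases j <;> simp [Matrix.smul_apply]

/-- The Cohen–Westreich `S`-matrix of `DK_n` (for even positive `n`)
diagonalizes the mixed fusion matrices:
`S_CW N^{KK̄} S_CW⁻¹ = diag(-1,1,1)` and
`S_CW N^K S_CW⁻¹ = diag(0, 2^n, -2^n)`. -/
theorem stmt17 (n : ℕ) (hn : Even n) (hpos : 0 < n)
    (SCW NKKb NK : Matrix (Fin 3) (Fin 3) ℂ)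
    (hS : SCW = ((-1 : ℂ) ^ (n / 2)) •
      !![0, (2 : ℂ) ^ (-(n : ℤ)), -(2 : ℂ) ^ (-(n : ℤ));
         (2 : ℂ) ^ (n - 1), 1/2, 1/2;
         -((2 : ℂ) ^ (n - 1)), 1/2, 1/2])
    (hNKKb : NKKb = !![1, 0, 0; 0, 0, 1; 0, 1, 0])
    (hNK : NK = !![0, 1, 1;
                   (2 : ℂ) ^ (2 * n - 1), 0, 0;
                   (2 : ℂ) ^ (2 * n - 1), 0, 0]) :
    SCW * NKKb * SCW⁻¹ = !![-1, 0, 0; 0, 1, 0; 0, 0, 1] ∧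
      SCW * NK * SCW⁻¹ = !![0, 0, 0;
                            0, (2 : ℂ) ^ n, 0;
                            0, 0, -((2 : ℂ) ^ n)] := by
  set c : ℂ := (-1 : ℂ) ^ (n / 2) with hc
  have h1 : (2:ℂ)^n = 2 * (2:ℂ)^(n-1) := by
    conv_lhs => rw [show n = (n-1)+1 by omega]
    rw [pow_succ']
  have h2 : (2:ℂ)^(2*n-1) = (2:ℂ)^n * (2:ℂ)^(n-1) := by
    rw [show 2*n-1 = n+(n-1) by omega, pow_add]
  have h3 : (2:ℂ)^(-(n:ℤ)) * (2:ℂ)^(n-1) = 1/2 := by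
    rw [← zpow_natCast (2:ℂ) (n-1), ← zpow_add₀ (two_ne_zero)]
    rw [show -(n:ℤ) + ((n-1:ℕ):ℤ) = -1 by
      have : (1:ℕ) ≤ n := hpos
      push_cast [this]; ring]
    norm_num
  rw [smul3_aux] at hS
  have hcne : c ≠ 0 := pow_ne_zero _ (by norm_num)
  have hdet : IsUnit SCW.det := by
    rw [hS, isUnit_iff_ne_zero]
    have hd : (!![c*0, c*(2:ℂ)^(-(n:ℤ)), c*(-(2:ℂ)^(-(n:ℤ)));
        c*(2:ℂ)^(n-1), c*(1/2), c*(1/2);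
        c*(-((2:ℂ)^(n-1))), c*(1/2), c*(1/2)]).det = -c^3 := by
      have h4 : ((2:ℂ)^n)⁻¹ * 2^(n-1) = 1/2 := by
        rw [h1]
        have hb : (2:ℂ)^(n-1) ≠ 0 := pow_ne_zero _ (by norm_num)
        field_simp
      rw [Matrix.det_fin_three]
      simp [zpow_neg, zpow_natCast]
      linear_combination (-2*c^3) * h4
    rw [hd]
    simp [hcne]
  constructor
  · have key : SCW * NKKb = !![-1, 0, 0; 0, 1, 0; 0, 0, 1] * SCW := by
      rw [hS, hNKKb]
      ext i j
      fin_cases i <;> fin_cases j <;>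
        simp [Matrix.mul_apply, Fin.sum_univ_three, Matrix.vecHead, Matrix.vecTail] <;> ring
    calc SCW * NKKb * SCW⁻¹
        = !![-1, 0, 0; 0, 1, 0; 0, 0, 1] * SCW * SCW⁻¹ := by rw [key]
      _ = _ := Matrix.mul_nonsing_inv_cancel_right _ _ hdet
  · have key : SCW * NK = !![0, 0, 0; 0, (2:ℂ)^n, 0; 0, 0, -((2:ℂ)^n)] * SCW := by
      rw [hS, hNK, h2, h1]
      ext i j
      fin_cases i <;> fin_cases j <;>
        simp [Matrix.mul_apply, Fin.sum_univ_three, Matrix.vecHead, Matrix.vecTail] <;> ring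
    calc SCW * NK * SCW⁻¹
        = !![0, 0, 0; 0, (2:ℂ)^n, 0; 0, 0, -((2:ℂ)^n)] * SCW * SCW⁻¹ := by rw [key]
      _ = _ := Matrix.mul_nonsing_inv_cancel_right _ _ hdet
end
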